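/- arXiv:2312.06390 — 7 statements merged into one kernel-verified Lean document; each statement's English description precedes it below -/
import Mathlib

section
/- Fix p > 1. The relation ≫_s is transitive on the open square: if (N,D), (M,P), (Q,R) lie in (−1,1)×(−1,1) with (N,D) ≫_s (M,P) and (M,P) ≫_s (Q,R), then (N,D) ≫_s (Q,R). (Part of Proposition 2.3.) -/
open MeasureTheory Pointwise

/-- The geometrically regular weight sequence `α_n(N,D) = √((pⁿ+N)/(pⁿ+D))`. -/
noncomputable def grws (p N D : ℝ) (n : ℕ) : ℝ :=
  Real.sqrt ((p ^ n + N) / (p ^ n + D))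

/-- Moments of a weight sequence: `γ_0 = 1`, `γ_n = ∏_{j<n} w_j²`. -/
noncomputable def moments (w : ℕ → ℝ) (n : ℕ) : ℝ :=
  ∏ j ∈ Finset.range n, (w j) ^ 2

/-- A bounded sequence of positive reals is a subnormal weight sequence if its
moment sequence is represented by a compactly supported Berger measure on `[0,∞)`. -/
def IsSubnormalWeight (w : ℕ → ℝ) : Prop :=
  (∀ n, 0 < w n) ∧ (∃ C : ℝ, ∀ n, w n ≤ C) ∧
  ∃ μ : Measure ℝ, IsFiniteMeasure μ ∧
    (∃ K : Set ℝ, IsCompact K ∧ K ⊆ Set.Ici (0 : ℝ) ∧ μ Kᶜ = 0) ∧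
    ∀ n : ℕ, moments w n = ∫ x, x ^ n ∂μ

lemma grws_pos {p N D : ℝ} (hp : 1 < p) (hN : -1 < N) (hD : -1 < D) (n : ℕ) :
    0 < grws p N D n := by
  have h1 : (1 : ℝ) ≤ p ^ n := one_le_pow₀ hp.le
  have hn : 0 < p ^ n + N := by linarith
  have hd : 0 < p ^ n + D := by linarith
  exact Real.sqrt_pos.2 (div_pos hn hd)

lemma mul_subnormal {w₁ w₂ : ℕ → ℝ} (h₁ : IsSubnormalWeight w₁)
    (h₂ : IsSubnormalWeight w₂) : IsSubnormalWeight (fun n => w₁ n * w₂ n) := by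
  obtain ⟨hpos₁, ⟨C₁, hC₁⟩, μ₁, hfin₁, ⟨K₁, hK₁c, hK₁s, hK₁0⟩, hm₁⟩ := h₁
  obtain ⟨hpos₂, ⟨C₂, hC₂⟩, μ₂, hfin₂, ⟨K₂, hK₂c, hK₂s, hK₂0⟩, hm₂⟩ := h₂
  haveI := hfin₁; haveI := hfin₂
  refine ⟨fun n => mul_pos (hpos₁ n) (hpos₂ n), ⟨C₁ * C₂, fun n => ?_⟩, ?_⟩
  · exact mul_le_mul (hC₁ n) (hC₂ n) (hpos₂ n).le
      (le_trans (hpos₁ 0).le (hC₁ 0))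
  · have hmeas : Measurable (fun z : ℝ × ℝ => z.1 * z.2) :=
      measurable_fst.mul measurable_snd
    refine ⟨Measure.map (fun z : ℝ × ℝ => z.1 * z.2) (μ₁.prod μ₂),
      Measure.isFiniteMeasure_map _ _, ⟨K₁ * K₂, hK₁c.mul hK₂c, ?_, ?_⟩, fun n => ?_⟩
    · rintro x ⟨a, ha, b, hb, rfl⟩
      exact Set.mem_Ici.2 (mul_nonneg (Set.mem_Ici.1 (hK₁s ha)) (Set.mem_Ici.1 (hK₂s hb)))
    · rw [Measure.map_apply hmeas (hK₁c.mul hK₂c).measurableSet.compl]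
      have hsub : (fun z : ℝ × ℝ => z.1 * z.2) ⁻¹' (K₁ * K₂)ᶜ ⊆
          (K₁ᶜ ×ˢ Set.univ) ∪ (Set.univ ×ˢ K₂ᶜ) := by
        rintro ⟨a, b⟩ hab
        by_contra hcon
        simp only [Set.mem_union, Set.mem_prod, Set.mem_univ, and_true, true_and,
          Set.mem_compl_iff, not_or, not_not] at hcon
        exact hab ⟨a, hcon.1, b, hcon.2, rfl⟩
      refine le_antisymm (le_trans (measure_mono hsub) ?_) zero_le
      refine le_trans (measure_union_le _ _) ?_
      rw [Measure.prod_prod, Measure.prod_prod, hK₁0, hK₂0]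
      simp
    · have : moments (fun n => w₁ n * w₂ n) n = moments w₁ n * moments w₂ n := by
        simp [moments, mul_pow, Finset.prod_mul_distrib]
      rw [this, hm₁ n, hm₂ n, ← MeasureTheory.integral_prod_mul
        (fun x : ℝ => x ^ n) (fun y : ℝ => y ^ n)]
      rw [integral_map hmeas.aemeasurable
        (continuous_pow n).aestronglyMeasurable]
      simp_rw [mul_pow]


/-- Moment infinitely divisible weight sequence: every positive real power is subnormal. -/
def IsMIDWeight (w : ℕ → ℝ) : Prop :=
  ∀ s : ℝ, 0 < s → IsSubnormalWeight (fun n => (w n) ^ s)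

/-- `(N,D) ≫_s (M,P)`: the quotient weight is subnormal. -/
def SubnormalSubord (p N D M P : ℝ) : Prop :=
  IsSubnormalWeight (fun n => grws p N D n / grws p M P n)

/-- `(N,D) ≫ (M,P)`: the quotient weight is MID. -/
def MIDSubord (p N D M P : ℝ) : Prop :=
  IsMIDWeight (fun n => grws p N D n / grws p M P n)

set_option linter.unusedVariables false in
/-- the relation `≫_s` is transitive on the open square. -/
theorem subnormalSubord_trans (p N D M P Q R : ℝ) (hp : 1 < p)
    (hN : -1 < N) (hN' : N < 1) (hD : -1 < D) (hD' : D < 1)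
    (hM : -1 < M) (hM' : M < 1) (hP : -1 < P) (hP' : P < 1)
    (hQ : -1 < Q) (hQ' : Q < 1) (hR : -1 < R) (hR' : R < 1)
    (h1 : SubnormalSubord p N D M P) (h2 : SubnormalSubord p M P Q R) :
    SubnormalSubord p N D Q R := by
  have key := mul_subnormal h1 h2
  have heq : (fun n => grws p N D n / grws p Q R n) =
      (fun n => (grws p N D n / grws p M P n) * (grws p M P n / grws p Q R n)) := by
    funext n
    rw [div_mul_div_comm, mul_comm (grws p N D n), mul_div_mul_left]
    exact (grws_pos hp hM hP n).ne'
  unfold SubnormalSubord at *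
  rw [heq]
  exact key
end

section
/- (Theorem 3.1(1), right shadow.) Fix p > 1 and let (N,D), (M,P) lie in the open square (−1,1)×(−1,1). If (N,D) ≫ (M,P) and −1 < M ≤ 0, then (N,D) ≫ (−M,P). -/
open MeasureTheory
open scoped Pointwise ENNReal

lemma isSubnormalWeight_mul {w v : ℕ → ℝ} (hw : IsSubnormalWeight w)
    (hv : IsSubnormalWeight v) : IsSubnormalWeight (fun n => w n * v n) := by
  obtain ⟨hwpos, ⟨Cw, hCw⟩, μw, hμwfin, ⟨Kw, hKwc, hKw0, hKwnull⟩, hμw⟩ := hw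
  obtain ⟨hvpos, ⟨Cv, hCv⟩, μv, hμvfin, ⟨Kv, hKvc, hKv0, hKvnull⟩, hμv⟩ := hv
  have hmul : Measurable fun z : ℝ × ℝ => z.1 * z.2 := measurable_fst.mul measurable_snd
  refine ⟨fun n => mul_pos (hwpos n) (hvpos n),
    ⟨Cw * Cv, fun n => mul_le_mul (hCw n) (hCv n) (hvpos n).le
      ((hwpos 0).le.trans (hCw 0))⟩, ?_⟩
  refine ⟨Measure.map (fun z : ℝ × ℝ => z.1 * z.2) (μw.prod μv), ?_,
    ⟨Kw * Kv, hKwc.mul hKvc, ?_, ?_⟩, ?_⟩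
  · constructor
    rw [Measure.map_apply hmul MeasurableSet.univ]
    exact measure_lt_top _ _
  · rintro x hx
    rw [Set.mem_mul] at hx
    obtain ⟨u, hu, t, ht, rfl⟩ := hx
    exact mul_nonneg (Set.mem_Ici.mp (hKw0 hu)) (Set.mem_Ici.mp (hKv0 ht))
  · rw [Measure.map_apply hmul (hKwc.mul hKvc).isClosed.measurableSet.compl]
    refine measure_mono_null (fun z hz => ?_) (measure_union_null
      (s := Kwᶜ ×ˢ Set.univ) (t := Set.univ ×ˢ Kvᶜ) ?_ ?_)
    · simp only [Set.mem_preimage, Set.mem_compl_iff] at hz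
      by_contra hc
      simp only [Set.mem_union, Set.mem_prod, Set.mem_compl_iff, Set.mem_univ,
        and_true, true_and, not_or, not_not] at hc
      exact hz (Set.mul_mem_mul hc.1 hc.2)
    · rw [Measure.prod_prod]; simp [hKwnull]
    · rw [Measure.prod_prod]; simp [hKvnull]
  · intro n
    have : moments (fun n => w n * v n) n = moments w n * moments v n := by
      simp [moments, mul_pow, Finset.prod_mul_distrib]
    rw [this, hμw n, hμv n,
      integral_map hmul.aemeasurable ((continuous_pow n).aestronglyMeasurable)]
    simp_rw [mul_pow]
    exact (integral_prod_mul (fun x => x ^ n) (fun y => y ^ n)).symm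

namespace ShadowAux

/-- `∫⁻ (ofReal x)^n dμ`. -/
noncomputable def emom (μ : Measure ℝ) (n : ℕ) : ℝ≥0∞ :=
  ∫⁻ x, (ENNReal.ofReal x) ^ n ∂μ

lemma emom_meas (n : ℕ) : Measurable fun x : ℝ => (ENNReal.ofReal x) ^ n :=
  ENNReal.measurable_ofReal.pow_const n

lemma emom_zero (μ : Measure ℝ) : emom μ 0 = μ Set.univ := by
  simp [emom, lintegral_one]

noncomputable def rr (q : ℝ) (i : ℕ) : ℝ := q ^ (2 * i + 1)

noncomputable def cc (s a q : ℝ) (i : ℕ) : ℝ :=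
  s * (2 * (1 / (2 * (i : ℝ) + 1)) * a ^ (2 * i + 1)) / (1 - rr q i)

noncomputable def fnn (s a q : ℝ) (n : ℕ) : ℝ := ∑' i, cc s a q i * rr q i ^ n

noncomputable def nu (s a q : ℝ) : Measure ℝ :=
  Measure.sum fun i => ENNReal.ofReal (cc s a q i) • Measure.dirac (rr q i)

noncomputable def convp (s a q : ℝ) : ℕ → Measure ℝ
  | 0 => Measure.dirac 1
  | (j + 1) => Measure.map (fun z : ℝ × ℝ => z.1 * z.2) ((nu s a q).prod (convp s a q j))

noncomputable def mu (s a q : ℝ) : Measure ℝ :=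
  Measure.sum fun j =>
    ENNReal.ofReal (Real.exp (-(fnn s a q 0)) / j.factorial) • convp s a q j

variable {p a s q : ℝ}

section basic
variable (hq : 0 < q) (hq1 : q < 1) (ha : 0 ≤ a) (ha1 : a < 1) (hs : 0 < s)

include hq in
lemma rr_pos (i : ℕ) : 0 < rr q i := pow_pos hq _

include hq hq1 in
lemma rr_le_q (i : ℕ) : rr q i ≤ q := by
  simpa [rr] using pow_le_pow_of_le_one hq.le hq1.le (Nat.le_add_left 1 (2 * i))

include hq hq1 in
lemma rr_mem (i : ℕ) : rr q i ∈ Set.Icc (0 : ℝ) 1 :=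
  ⟨(rr_pos hq i).le, (rr_le_q hq hq1 i).trans hq1.le⟩

include hq hq1 ha hs in
lemma cc_nonneg (i : ℕ) : 0 ≤ cc s a q i := by
  have h1 : (0:ℝ) < 2 * (i : ℝ) + 1 := by positivity
  have h2 : rr q i < 1 := ((rr_le_q hq hq1 i).trans_lt hq1)
  have h3 := pow_nonneg ha (2 * i + 1)
  unfold cc
  apply div_nonneg
  · positivity
  · linarith

include hq hq1 ha ha1 hs in
lemma summable_crn (n : ℕ) : Summable fun i => cc s a q i * rr q i ^ n := by
  have hb : Summable fun i : ℕ => s * 2 * a / (1 - q) * (a ^ 2) ^ i :=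
    (summable_geometric_of_lt_one (by positivity) (by nlinarith)).mul_left _
  refine Summable.of_nonneg_of_le
    (fun i => mul_nonneg (cc_nonneg hq hq1 ha hs i)
      (pow_nonneg (rr_pos hq i).le n)) (fun i => ?_) hb
  have h2 : rr q i ≤ 1 := ((rr_le_q hq hq1 i).trans hq1.le)
  have h3 : cc s a q i * rr q i ^ n ≤ cc s a q i :=
    mul_le_of_le_one_right (cc_nonneg hq hq1 ha hs i)
      (pow_le_one₀ (rr_pos hq i).le h2)
  refine h3.trans ?_
  have h4 : (1:ℝ) / (2 * (i:ℝ) + 1) ≤ 1 := by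
    rw [div_le_one (by positivity)]; nlinarith [Nat.cast_nonneg (α := ℝ) i]
  have h5 : (0:ℝ) < 1 - q := by linarith
  have h6 : 1 - q ≤ 1 - rr q i := by linarith [rr_le_q hq hq1 i]
  have h7 : a ^ (2 * i + 1) = (a ^ 2) ^ i * a := by
    rw [← pow_mul, pow_succ]
  calc cc s a q i ≤ s * (2 * 1 * a ^ (2 * i + 1)) / (1 - q) := by
        unfold cc
        gcongr
    _ = s * 2 * a / (1 - q) * (a ^ 2) ^ i := by rw [h7]; ring

include hq hq1 ha hs in
lemma fnn_nonneg (n : ℕ) : 0 ≤ fnn s a q n :=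
  tsum_nonneg fun i => mul_nonneg (cc_nonneg hq hq1 ha hs i)
    (pow_nonneg (rr_pos hq i).le n)

include hq hq1 ha ha1 hs in
lemma emom_nu (n : ℕ) : emom (nu s a q) n = ENNReal.ofReal (fnn s a q n) := by
  rw [emom, nu, lintegral_sum_measure]
  have h1 : ∀ i : ℕ, ∫⁻ x, (ENNReal.ofReal x) ^ n
      ∂(ENNReal.ofReal (cc s a q i) • Measure.dirac (rr q i))
      = ENNReal.ofReal (cc s a q i * rr q i ^ n) := by
    intro i
    rw [lintegral_smul_measure, lintegral_dirac' _ (emom_meas n),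
      ← ENNReal.ofReal_pow (rr_pos hq i).le, smul_eq_mul, ← ENNReal.ofReal_mul
        (cc_nonneg hq hq1 ha hs i)]
  simp_rw [h1]
  rw [← ENNReal.ofReal_tsum_of_nonneg
    (fun i => mul_nonneg (cc_nonneg hq hq1 ha hs i) (pow_nonneg (rr_pos hq i).le n))
    (summable_crn hq hq1 ha ha1 hs n)]
  rfl

include hq hq1 ha ha1 hs in
lemma nu_fin : IsFiniteMeasure (nu s a q) := by
  constructor
  rw [← emom_zero, emom_nu hq hq1 ha ha1 hs]
  exact ENNReal.ofReal_lt_top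

include hq hq1 in
lemma nu_null : nu s a q (Set.Icc (0:ℝ) 1)ᶜ = 0 := by
  rw [nu, Measure.sum_apply _ measurableSet_Icc.compl]
  have : ∀ i : ℕ, (ENNReal.ofReal (cc s a q i) • Measure.dirac (rr q i))
      (Set.Icc (0:ℝ) 1)ᶜ = 0 := by
    intro i
    rw [Measure.smul_apply, Measure.dirac_apply' _ measurableSet_Icc.compl]
    simp [Set.indicator, rr_mem hq hq1 i]
  simp [this]

include hq hq1 ha ha1 hs in
lemma convp_props (j : ℕ) :
    convp s a q j (Set.Icc (0:ℝ) 1)ᶜ = 0 ∧ IsFiniteMeasure (convp s a q j) ∧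
    ∀ n, emom (convp s a q j) n = (ENNReal.ofReal (fnn s a q n)) ^ j := by
  haveI := nu_fin hq hq1 ha ha1 hs
  have hmul : Measurable fun z : ℝ × ℝ => z.1 * z.2 := measurable_fst.mul measurable_snd
  induction j with
  | zero =>
    refine ⟨?_, ?_, ?_⟩
    · rw [convp, Measure.dirac_apply' _ measurableSet_Icc.compl]
      simp [Set.indicator]
    · rw [convp]; infer_instance
    · intro n
      rw [convp, emom, lintegral_dirac' _ (emom_meas n)]
      simp
  | succ j ih =>
    obtain ⟨ihnull, ihfin, ihmom⟩ := ih
    haveI := ihfin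
    have hbad : ((nu s a q).prod (convp s a q j))
        {z : ℝ × ℝ | ¬ (z.1 ∈ Set.Icc (0:ℝ) 1 ∧ z.2 ∈ Set.Icc (0:ℝ) 1)} = 0 := by
      refine measure_mono_null (fun z hz => ?_) (measure_union_null
        (s := (Set.Icc (0:ℝ) 1)ᶜ ×ˢ Set.univ) (t := Set.univ ×ˢ (Set.Icc (0:ℝ) 1)ᶜ) ?_ ?_)
      · simp only [Set.mem_setOf_eq, not_and_or] at hz
        rcases hz with hz | hz
        · exact Or.inl ⟨hz, Set.mem_univ _⟩
        · exact Or.inr ⟨Set.mem_univ _, hz⟩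
      · rw [Measure.prod_prod, nu_null hq hq1]; simp
      · rw [Measure.prod_prod, ihnull]; simp
    refine ⟨?_, ?_, ?_⟩
    · rw [convp, Measure.map_apply hmul measurableSet_Icc.compl]
      refine measure_mono_null (fun z hz => ?_) hbad
      simp only [Set.mem_preimage, Set.mem_compl_iff] at hz
      simp only [Set.mem_setOf_eq]
      intro hc
      exact hz ⟨mul_nonneg hc.1.1 hc.2.1, mul_le_one₀ hc.1.2 hc.2.1 hc.2.2⟩
    · constructor
      rw [convp, Measure.map_apply hmul MeasurableSet.univ]
      exact measure_lt_top _ _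
    · intro n
      rw [convp, emom, lintegral_map (emom_meas n) hmul]
      have hae : (fun z : ℝ × ℝ => (ENNReal.ofReal (z.1 * z.2)) ^ n)
          =ᵐ[(nu s a q).prod (convp s a q j)]
          (fun z : ℝ × ℝ => (ENNReal.ofReal z.1) ^ n * (ENNReal.ofReal z.2) ^ n) := by
        rw [Filter.EventuallyEq, ae_iff]
        refine measure_mono_null (fun z hz => ?_) hbad
        simp only [Set.mem_setOf_eq] at hz ⊢
        intro hc
        exact hz (by rw [ENNReal.ofReal_mul hc.1.1, mul_pow])
      rw [lintegral_congr_ae hae,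
        lintegral_prod_mul (emom_meas n).aemeasurable (emom_meas n).aemeasurable]
      rw [show (∫⁻ x, (ENNReal.ofReal x) ^ n ∂nu s a q) = emom (nu s a q) n from rfl,
        show (∫⁻ x, (ENNReal.ofReal x) ^ n ∂convp s a q j) = emom (convp s a q j) n from rfl,
        emom_nu hq hq1 ha ha1 hs, ihmom n, pow_succ]
      ring

include hq hq1 ha ha1 hs in
lemma emom_mu (n : ℕ) :
    emom (mu s a q) n = ENNReal.ofReal (Real.exp (fnn s a q n - fnn s a q 0)) := by
  have hfn0 := fnn_nonneg hq hq1 ha hs n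
  rw [emom, mu, lintegral_sum_measure]
  have h1 : ∀ j : ℕ, ∫⁻ x, (ENNReal.ofReal x) ^ n
      ∂(ENNReal.ofReal (Real.exp (-(fnn s a q 0)) / j.factorial) • convp s a q j)
      = ENNReal.ofReal (Real.exp (-(fnn s a q 0)) / j.factorial * fnn s a q n ^ j) := by
    intro j
    rw [lintegral_smul_measure,
      show (∫⁻ x, (ENNReal.ofReal x) ^ n ∂convp s a q j) = emom (convp s a q j) n from rfl,
      (convp_props hq hq1 ha ha1 hs j).2.2 n,
      ← ENNReal.ofReal_pow hfn0, smul_eq_mul, ← ENNReal.ofReal_mul (by positivity)]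
  simp_rw [h1]
  have hsum : Summable fun j : ℕ =>
      Real.exp (-(fnn s a q 0)) / j.factorial * fnn s a q n ^ j := by
    refine ((Real.summable_pow_div_factorial (fnn s a q n)).mul_left
      (Real.exp (-(fnn s a q 0)))).congr fun j => ?_
    field_simp
  rw [← ENNReal.ofReal_tsum_of_nonneg (fun j => by positivity) hsum]
  congr 1
  have hexp : Real.exp (fnn s a q n) = ∑' j : ℕ, fnn s a q n ^ j / j.factorial := by
    rw [Real.exp_eq_exp_ℝ, NormedSpace.exp_eq_tsum_div]
  calc (∑' j : ℕ, Real.exp (-(fnn s a q 0)) / j.factorial * fnn s a q n ^ j)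
      = ∑' j : ℕ, Real.exp (-(fnn s a q 0)) * (fnn s a q n ^ j / j.factorial) := by
        refine tsum_congr fun j => ?_
        field_simp
    _ = Real.exp (-(fnn s a q 0)) * Real.exp (fnn s a q n) := by
        rw [tsum_mul_left, ← hexp]
    _ = Real.exp (fnn s a q n - fnn s a q 0) := by
        rw [← Real.exp_add]; ring_nf

include hq hq1 ha ha1 hs in
lemma mu_null : mu s a q (Set.Icc (0:ℝ) 1)ᶜ = 0 := by
  rw [mu, Measure.sum_apply _ measurableSet_Icc.compl]
  have : ∀ j : ℕ, (ENNReal.ofReal (Real.exp (-(fnn s a q 0)) / j.factorial) • convp s a q j)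
      (Set.Icc (0:ℝ) 1)ᶜ = 0 := by
    intro j
    rw [Measure.smul_apply, (convp_props hq hq1 ha ha1 hs j).1]
    simp
  simp [this]

include hq hq1 ha ha1 hs in
lemma mu_fin : IsFiniteMeasure (mu s a q) := by
  constructor
  rw [← emom_zero, emom_mu hq hq1 ha ha1 hs]
  exact ENNReal.ofReal_lt_top

lemma moments_eq (hp : 1 < p) (ha : 0 ≤ a) (ha1 : a < 1) (hs : 0 < s) (n : ℕ) :
    moments (fun m => (Real.sqrt ((p ^ m - a) / (p ^ m + a))) ^ s) n
      = Real.exp (fnn s a p⁻¹ n - fnn s a p⁻¹ 0) := by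
  have hp0 : (0:ℝ) < p := by linarith
  have hq : (0:ℝ) < p⁻¹ := inv_pos.2 hp0
  have hq1 : p⁻¹ < 1 := by
    rw [inv_lt_one_iff₀]; right; exact hp
  have hpow : ∀ m : ℕ, (1:ℝ) ≤ p ^ m := fun m => one_le_pow₀ hp.le
  have hnum : ∀ m : ℕ, (0:ℝ) < p ^ m - a := fun m => by linarith [hpow m]
  have hden : ∀ m : ℕ, (0:ℝ) < p ^ m + a := fun m => by linarith [hpow m]
  have hRpos : ∀ m : ℕ, (0:ℝ) < (p ^ m - a) / (p ^ m + a) :=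
    fun m => div_pos (hnum m) (hden m)
  -- Step 1: each squared weight is R^s
  have key : ∀ m : ℕ, ((Real.sqrt ((p ^ m - a) / (p ^ m + a))) ^ s) ^ 2
      = ((p ^ m - a) / (p ^ m + a)) ^ s := by
    intro m
    set x := (p ^ m - a) / (p ^ m + a) with hx
    have hx0 : 0 ≤ x := (hRpos m).le
    rw [← Real.rpow_natCast (Real.sqrt x ^ s) 2, ← Real.rpow_mul (Real.sqrt_nonneg x),
      Real.sqrt_eq_rpow, ← Real.rpow_mul hx0]
    congr 1
    ring
  have step1 : moments (fun m => (Real.sqrt ((p ^ m - a) / (p ^ m + a))) ^ s) n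
      = Real.exp (∑ j ∈ Finset.range n, Real.log ((p ^ j - a) / (p ^ j + a)) * s) := by
    rw [moments, Real.exp_sum]
    refine Finset.prod_congr rfl fun j _ => ?_
    rw [key j, Real.rpow_def_of_pos (hRpos j)]
  rw [step1]
  congr 1
  -- Step 2: term-wise log expansion
  have hxj : ∀ j : ℕ, |a * p⁻¹ ^ j| < 1 := by
    intro j
    rw [abs_of_nonneg (by positivity)]
    calc a * p⁻¹ ^ j ≤ a * 1 := by
          refine mul_le_mul_of_nonneg_left (pow_le_one₀ hq.le hq1.le) ha
      _ < 1 := by linarith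
  have hterm : ∀ j : ℕ, Real.log ((p ^ j - a) / (p ^ j + a)) * s
      = ∑' k : ℕ, (-s) * ((2:ℝ) * (1 / (2 * (k:ℝ) + 1)) * (a * p⁻¹ ^ j) ^ (2 * k + 1)) := by
    intro j
    have hS := Real.hasSum_log_sub_log_of_abs_lt_one (hxj j)
    rw [(hS.mul_left (-s)).tsum_eq]
    have hR : (p ^ j - a) / (p ^ j + a) = (1 - a * p⁻¹ ^ j) / (1 + a * p⁻¹ ^ j) := by
      have hpj : (p:ℝ) ^ j ≠ 0 := by positivity
      field_simp
      have hpp : p ^ j * (1 / p) ^ j = 1 := by rw [← mul_pow, mul_one_div_cancel hp0.ne', one_pow]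
      linear_combination (2 * a) * hpp
    have h1 : (0:ℝ) < 1 - a * p⁻¹ ^ j := by
      have := hxj j; rw [abs_of_nonneg (by positivity)] at this; linarith
    have h2 : (0:ℝ) < 1 + a * p⁻¹ ^ j := by positivity
    rw [hR, Real.log_div h1.ne' h2.ne']
    ring
  calc (∑ j ∈ Finset.range n, Real.log ((p ^ j - a) / (p ^ j + a)) * s)
      = ∑ j ∈ Finset.range n, ∑' k : ℕ,
          (-s) * ((2:ℝ) * (1 / (2 * (k:ℝ) + 1)) * (a * p⁻¹ ^ j) ^ (2 * k + 1)) :=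
        Finset.sum_congr rfl fun j _ => hterm j
    _ = ∑' k : ℕ, ∑ j ∈ Finset.range n,
          (-s) * ((2:ℝ) * (1 / (2 * (k:ℝ) + 1)) * (a * p⁻¹ ^ j) ^ (2 * k + 1)) := by
        refine (Summable.tsum_finsetSum fun j _ => ?_).symm
        exact ((Real.hasSum_log_sub_log_of_abs_lt_one (hxj j)).mul_left (-s)).summable
    _ = ∑' k : ℕ, (cc s a p⁻¹ k * rr p⁻¹ k ^ n - cc s a p⁻¹ k * rr p⁻¹ k ^ 0) := by
        refine tsum_congr fun k => ?_
        have hrlt : rr p⁻¹ k < 1 :=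
          lt_of_le_of_lt (by
            simpa [rr] using pow_le_pow_of_le_one hq.le hq1.le (Nat.le_add_left 1 (2*k))) hq1
        have hrne : rr p⁻¹ k - 1 ≠ 0 := by linarith
        have hrne' : (1:ℝ) - rr p⁻¹ k ≠ 0 := by linarith
        have hpowsplit : ∀ j : ℕ, (a * p⁻¹ ^ j) ^ (2 * k + 1)
            = a ^ (2 * k + 1) * rr p⁻¹ k ^ j := by
          intro j
          rw [mul_pow, rr, ← pow_mul, ← pow_mul, Nat.mul_comm j (2*k+1)]
        simp_rw [hpowsplit]
        rw [show (fun j => (-s) * ((2:ℝ) * (1 / (2 * (k:ℝ) + 1))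
            * (a ^ (2 * k + 1) * rr p⁻¹ k ^ j))) = fun j =>
            ((-s) * ((2:ℝ) * (1 / (2 * (k:ℝ) + 1)) * a ^ (2 * k + 1))) * rr p⁻¹ k ^ j
          from funext fun j => by ring]
        rw [← Finset.mul_sum, geom_sum_eq hrlt.ne]
        simp only [cc, pow_zero, mul_one]
        rw [show rr p⁻¹ k - 1 = -(1 - rr p⁻¹ k) from by ring, div_neg]
        ring
    _ = fnn s a p⁻¹ n - fnn s a p⁻¹ 0 :=
        Summable.tsum_sub (summable_crn hq hq1 ha ha1 hs n) (summable_crn hq hq1 ha ha1 hs 0)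


include hq hq1 ha ha1 hs in
lemma subnormal_ratio' (hp : 1 < p) (hqdef : q = p⁻¹) :
    IsSubnormalWeight (fun m => (Real.sqrt ((p ^ m - a) / (p ^ m + a))) ^ s) := by
  subst hqdef
  have hpow : ∀ m : ℕ, (1:ℝ) ≤ p ^ m := fun m => one_le_pow₀ hp.le
  have hnum : ∀ m : ℕ, (0:ℝ) < p ^ m - a := fun m => by linarith [hpow m]
  have hden : ∀ m : ℕ, (0:ℝ) < p ^ m + a := fun m => by linarith [hpow m]
  have hRpos : ∀ m : ℕ, (0:ℝ) < (p ^ m - a) / (p ^ m + a) :=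
    fun m => div_pos (hnum m) (hden m)
  haveI := mu_fin hq hq1 ha ha1 hs
  have hae : ∀ᵐ x ∂(mu s a p⁻¹), x ∈ Set.Icc (0:ℝ) 1 := by
    rw [ae_iff]
    convert mu_null hq hq1 ha ha1 hs using 2
    rfl
  refine ⟨fun m => Real.rpow_pos_of_pos (Real.sqrt_pos.2 (hRpos m)) s,
    ⟨1, fun m => Real.rpow_le_one (Real.sqrt_nonneg _)
      (Real.sqrt_le_one.mpr ((div_le_one (hden m)).2 (by linarith))) hs.le⟩,
    mu s a p⁻¹, inferInstance,
    ⟨Set.Icc 0 1, isCompact_Icc, fun x hx => hx.1, mu_null hq hq1 ha ha1 hs⟩, ?_⟩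
  intro n
  have hbo : ∫ x, x ^ n ∂(mu s a p⁻¹) = (emom (mu s a p⁻¹) n).toReal := by
    rw [integral_eq_lintegral_of_nonneg_ae
      (by filter_upwards [hae] with x hx; exact pow_nonneg hx.1 n)
      ((continuous_pow n).aestronglyMeasurable)]
    congr 1
    refine lintegral_congr_ae ?_
    filter_upwards [hae] with x hx
    rw [ENNReal.ofReal_pow hx.1]
  rw [hbo, emom_mu hq hq1 ha ha1 hs n, ENNReal.toReal_ofReal (Real.exp_nonneg _),
    moments_eq hp ha ha1 hs n]

end basic

lemma subnormal_ratio {p a s : ℝ} (hp : 1 < p) (ha : 0 ≤ a) (ha1 : a < 1) (hs : 0 < s) :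
    IsSubnormalWeight (fun m => (Real.sqrt ((p ^ m - a) / (p ^ m + a))) ^ s) := by
  have hp0 : (0:ℝ) < p := by linarith
  have hq : (0:ℝ) < p⁻¹ := inv_pos.2 hp0
  have hq1 : p⁻¹ < 1 := by rw [inv_lt_one_iff₀]; right; exact hp
  exact subnormal_ratio' hq hq1 ha ha1 hs hp rfl

end ShadowAux

/-- Theorem 3.1(1), right shadow. -/
theorem midSubord_right_shadow (p N D M P : ℝ) (hp : 1 < p)
    (hN : -1 < N) (hN' : N < 1) (hD : -1 < D) (hD' : D < 1)
    (hM : -1 < M) (hM' : M < 1) (hP : -1 < P) (hP' : P < 1)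
    (h : MIDSubord p N D M P) (hM0 : M ≤ 0) :
    MIDSubord p N D (-M) P := by
  intro s hs
  have hp0 : (0:ℝ) < p := by linarith
  have hpow : ∀ m : ℕ, (1:ℝ) ≤ p ^ m := fun m => one_le_pow₀ hp.le
  have h1 := h s hs
  have h2 := ShadowAux.subnormal_ratio (a := -M) hp (by linarith) (by linarith) hs
  have h3 := isSubnormalWeight_mul h1 h2
  convert h3 using 1
  funext n
  show (grws p N D n / grws p (-M) P n) ^ s
      = (grws p N D n / grws p M P n) ^ s * Real.sqrt ((p ^ n - -M) / (p ^ n + -M)) ^ s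
  have hxM : (0:ℝ) < p ^ n + M := by linarith [hpow n]
  have hxM' : (0:ℝ) < p ^ n - M := by linarith [hpow n]
  have hxP : (0:ℝ) < p ^ n + P := by linarith [hpow n]
  have hgM : grws p M P n ≠ 0 :=
    ne_of_gt (Real.sqrt_pos.2 (div_pos hxM hxP))
  have e1 : grws p M P n / grws p (-M) P n = Real.sqrt ((p ^ n - -M) / (p ^ n + -M)) := by
    rw [grws, grws, ← Real.sqrt_div (by positivity : (0:ℝ) ≤ (p ^ n + M) / (p ^ n + P))]
    congr 1
    rw [div_div_div_comm]
    rw [div_self hxP.ne', div_one]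
    congr 1 <;> ring
  have e2 : grws p N D n / grws p (-M) P n
      = grws p N D n / grws p M P n * (grws p M P n / grws p (-M) P n) := by
    rw [div_mul_div_comm, mul_comm (grws p M P n) (grws p (-M) P n),
      mul_div_mul_right _ _ hgM]
  have hnn : 0 ≤ grws p N D n / grws p M P n :=
    div_nonneg (Real.sqrt_nonneg _) (Real.sqrt_nonneg _)
  rw [e2, e1, Real.mul_rpow hnn (Real.sqrt_nonneg _)]
end

section
/- (Theorem 3.1(2), central reversed shadow.) Fix p > 1 and let (N,D), (M,P) lie in the open square (−1,1)×(−1,1). If (N,D) ≫ (M,P) and |M| ≥ |P|, then (N,D) ≫ (−P,−M). -/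
open MeasureTheory
open scoped ENNReal NNReal
set_option maxHeartbeats 1000000

namespace ShadowAux

/-! ### Convolution powers and exponentials of nonnegative power series -/

/-- `convPow f j` is the `j`-fold Cauchy convolution power of the sequence `f`. -/
noncomputable def convPow (f : ℕ → ℝ) : ℕ → ℕ → ℝ
  | 0, m => if m = 0 then 1 else 0
  | (j+1), m => ∑ kl ∈ Finset.HasAntidiagonal.antidiagonal m, f kl.1 * convPow f j kl.2

lemma convPow_nonneg {f : ℕ → ℝ} (hf : ∀ k, 0 ≤ f k) (j m : ℕ) : 0 ≤ convPow f j m := by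
  induction j generalizing m with
  | zero => simp only [convPow]; split <;> norm_num
  | succ j ih =>
    simp only [convPow]
    exact Finset.sum_nonneg fun kl _ => mul_nonneg (hf _) (ih _)

lemma summable_geom_aux {f : ℕ → ℝ} (hf : ∀ k, 0 ≤ f k) (hsf : Summable f)
    {x : ℝ} (hx0 : 0 ≤ x) (hx1 : x ≤ 1) : Summable (fun k => f k * x ^ k) := by
  refine Summable.of_nonneg_of_le (fun k => mul_nonneg (hf k) (pow_nonneg hx0 k)) (fun k => ?_) hsf
  calc f k * x ^ k ≤ f k * 1 := by
        refine mul_le_mul_of_nonneg_left ?_ (hf k)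
        exact pow_le_one₀ hx0 hx1
    _ = f k := mul_one _

lemma hasSum_convPow {f : ℕ → ℝ} (hf : ∀ k, 0 ≤ f k) (hsf : Summable f)
    {x : ℝ} (hx0 : 0 ≤ x) (hx1 : x ≤ 1) (j : ℕ) :
    HasSum (fun m => convPow f j m * x ^ m) ((∑' k, f k * x ^ k) ^ j) := by
  induction j with
  | zero =>
    simp only [convPow, pow_zero]
    have : (fun m => (if m = 0 then (1:ℝ) else 0) * x ^ m) =
        (fun m => if m = 0 then (1:ℝ) else 0) := by
      funext m; split <;> simp_all
    rw [this]
    simpa using hasSum_ite_eq 0 (1:ℝ)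
  | succ j ih =>
    have hg : Summable (fun k => f k * x ^ k) := summable_geom_aux hf hsf hx0 hx1
    have hgnn : ∀ k, 0 ≤ f k * x ^ k := fun k => mul_nonneg (hf k) (pow_nonneg hx0 k)
    have hhnn : ∀ m, 0 ≤ convPow f j m * x ^ m :=
      fun m => mul_nonneg (convPow_nonneg hf j m) (pow_nonneg hx0 m)
    have hprod : Summable (fun p : ℕ × ℕ => (f p.1 * x ^ p.1) * (convPow f j p.2 * x ^ p.2)) := by
      rw [summable_prod_of_nonneg (fun p => mul_nonneg (hgnn p.1) (hhnn p.2))]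
      constructor
      · intro k; simpa using ih.summable.mul_left (f k * x ^ k)
      · have : (fun k => ∑' m, (f k * x ^ k) * (convPow f j m * x ^ m)) =
            (fun k => (f k * x ^ k) * (∑' k, f k * x ^ k) ^ j) := by
          funext k; rw [tsum_mul_left, ih.tsum_eq]
        rw [this]
        exact hg.mul_right _
    have key : ((∑' k, f k * x ^ k) * ∑' m, convPow f j m * x ^ m) =
        ∑' m, ∑ kl ∈ Finset.HasAntidiagonal.antidiagonal m, (f kl.1 * x ^ kl.1) * (convPow f j kl.2 * x ^ kl.2) :=
      Summable.tsum_mul_tsum_eq_tsum_sum_antidiagonal (f := fun k => f k * x ^ k)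
        (g := fun m => convPow f j m * x ^ m) hg ih.summable hprod
    have hsum2 : Summable (fun m => ∑ kl ∈ Finset.HasAntidiagonal.antidiagonal m,
        (f kl.1 * x ^ kl.1) * (convPow f j kl.2 * x ^ kl.2)) :=
      summable_sum_mul_antidiagonal_of_summable_mul (f := fun k => f k * x ^ k)
        (g := fun m => convPow f j m * x ^ m) hprod
    have heq : ∀ m, ∑ kl ∈ Finset.HasAntidiagonal.antidiagonal m,
        (f kl.1 * x ^ kl.1) * (convPow f j kl.2 * x ^ kl.2) = convPow f (j+1) m * x ^ m := by
      intro m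
      simp only [convPow, Finset.sum_mul]
      refine Finset.sum_congr rfl fun kl hkl => ?_
      have : kl.1 + kl.2 = m := Finset.HasAntidiagonal.mem_antidiagonal.mp hkl
      rw [← this, pow_add]; ring
    have hsum3 : Summable (fun m => convPow f (j+1) m * x ^ m) := by
      refine hsum2.congr heq
    rw [hsum3.hasSum_iff]
    have : ∑' m, convPow f (j+1) m * x ^ m = ∑' m, ∑ kl ∈ Finset.HasAntidiagonal.antidiagonal m,
        (f kl.1 * x ^ kl.1) * (convPow f j kl.2 * x ^ kl.2) := by
      exact tsum_congr fun m => (heq m).symm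
    rw [this, ← key, ih.tsum_eq, pow_succ]
    ring

/-- Taylor coefficients of `exp (∑ f k x^k)`. -/
noncomputable def bcoef (f : ℕ → ℝ) (m : ℕ) : ℝ := ∑' j : ℕ, convPow f j m / j.factorial

lemma summable_bcoef_aux {f : ℕ → ℝ} (hf : ∀ k, 0 ≤ f k) (hsf : Summable f) (m : ℕ) :
    Summable (fun j : ℕ => convPow f j m / j.factorial) := by
  have hS : ∀ j, convPow f j m ≤ (∑' k, f k) ^ j := by
    intro j
    have h1 := hasSum_convPow hf hsf (zero_le_one) (le_refl (1:ℝ)) j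
    simp only [one_pow, mul_one] at h1
    exact Summable.le_tsum h1.summable m (fun i _ => convPow_nonneg hf j i) |>.trans_eq h1.tsum_eq
  refine Summable.of_nonneg_of_le
    (fun j => div_nonneg (convPow_nonneg hf j m) (Nat.cast_nonneg _)) (fun j => ?_)
    (Real.summable_pow_div_factorial (∑' k, f k))
  gcongr
  exact hS j

lemma bcoef_nonneg {f : ℕ → ℝ} (hf : ∀ k, 0 ≤ f k) (hsf : Summable f) (m : ℕ) :
    0 ≤ bcoef f m :=
  tsum_nonneg fun j => div_nonneg (convPow_nonneg hf j m) (Nat.cast_nonneg _)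

lemma hasSum_bcoef {f : ℕ → ℝ} (hf : ∀ k, 0 ≤ f k) (hsf : Summable f)
    {x : ℝ} (hx0 : 0 ≤ x) (hx1 : x ≤ 1) :
    HasSum (fun m => bcoef f m * x ^ m) (Real.exp (∑' k, f k * x ^ k)) := by
  set F := ∑' k, f k * x ^ k with hF
  have hrow : ∀ j : ℕ, HasSum (fun m => convPow f j m * x ^ m / (j.factorial : ℝ))
      (F ^ j / (j.factorial : ℝ)) :=
    fun j => (hasSum_convPow hf hsf hx0 hx1 j).div_const _
  have hGnn : ∀ q : ℕ × ℕ, 0 ≤ convPow f q.1 q.2 * x ^ q.2 / (q.1.factorial : ℝ) :=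
    fun q => div_nonneg (mul_nonneg (convPow_nonneg hf q.1 q.2) (pow_nonneg hx0 q.2))
      (Nat.cast_nonneg _)
  have hG : Summable (fun q : ℕ × ℕ => convPow f q.1 q.2 * x ^ q.2 / (q.1.factorial : ℝ)) := by
    rw [summable_prod_of_nonneg hGnn]
    refine ⟨fun j => (hrow j).summable, ?_⟩
    have heq : (fun j : ℕ => ∑' m, convPow f j m * x ^ m / (j.factorial : ℝ)) =
        fun j : ℕ => F ^ j / (j.factorial : ℝ) := funext fun j => (hrow j).tsum_eq
    rw [heq]
    exact Real.summable_pow_div_factorial F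
  have hexp : Real.exp F = ∑' j : ℕ, F ^ j / (j.factorial : ℝ) := by
    rw [Real.exp_eq_exp_ℝ, NormedSpace.exp_eq_tsum_div]
  have hswap : ∑' (m : ℕ) (j : ℕ), convPow f j m * x ^ m / (j.factorial : ℝ)
      = ∑' (j : ℕ) (m : ℕ), convPow f j m * x ^ m / (j.factorial : ℝ) :=
    Summable.tsum_comm (f := fun j m => convPow f j m * x ^ m / (j.factorial : ℝ)) hG
  have hcol : ∀ m, ∑' j : ℕ, convPow f j m * x ^ m / (j.factorial : ℝ) = bcoef f m * x ^ m := by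
    intro m
    rw [bcoef, ← tsum_mul_right]
    exact tsum_congr fun j => by ring
  have hsumm : Summable (fun m => bcoef f m * x ^ m) := by
    have h3 : Summable (fun q : ℕ × ℕ =>
        convPow f q.2 q.1 * x ^ q.1 / (q.2.factorial : ℝ)) :=
      hG.prod_symm.congr fun q => rfl
    rw [summable_prod_of_nonneg (fun q : ℕ × ℕ => hGnn (q.2, q.1))] at h3
    refine h3.2.congr fun m => ?_
    exact hcol m
  rw [hsumm.hasSum_iff]
  calc ∑' m, bcoef f m * x ^ m
      = ∑' (m : ℕ) (j : ℕ), convPow f j m * x ^ m / (j.factorial : ℝ) :=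
        tsum_congr fun m => (hcol m).symm
    _ = ∑' (j : ℕ) (m : ℕ), convPow f j m * x ^ m / (j.factorial : ℝ) := hswap
    _ = ∑' j : ℕ, F ^ j / (j.factorial : ℝ) := tsum_congr fun j => (hrow j).tsum_eq
    _ = Real.exp F := hexp.symm

/-! ### The key moment identity for the shadow quotient -/

lemma core_moments (a b r s : ℝ) (hb0 : 0 ≤ b) (hba : b ≤ a) (ha1 : a < 1)
    (hr0 : 0 < r) (hr1 : r < 1) (hs : 0 < s) :
    ∃ c : ℕ → ℝ, (∀ m, 0 ≤ c m) ∧ Summable c ∧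
      ∀ n : ℕ, (∏ j ∈ Finset.range n, ((1 - a * r ^ j) / (1 - b * r ^ j)) ^ s)
        = ∑' m, c m * (r ^ m) ^ n := by
  have ha0 : 0 ≤ a := hb0.trans hba
  have hr0' : 0 ≤ r := hr0.le
  -- positivity of the basic quantities
  have hden : ∀ j : ℕ, 0 < 1 - a * r ^ j ∧ 0 < 1 - b * r ^ j := by
    intro j
    have h1 : a * r ^ j < 1 := by
      calc a * r ^ j ≤ a * 1 := by
            exact mul_le_mul_of_nonneg_left (pow_le_one₀ hr0' hr1.le) ha0
        _ = a := mul_one a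
        _ < 1 := ha1
    have h2 : b * r ^ j ≤ a * r ^ j :=
      mul_le_mul_of_nonneg_right hba (pow_nonneg hr0' j)
    exact ⟨by linarith, by linarith⟩
  -- the coefficient sequence
  set f : ℕ → ℝ := fun k => if k = 0 then 0 else s * (a ^ k - b ^ k) / (k * (1 - r ^ k)) with hfdef
  have hrk : ∀ k : ℕ, 1 ≤ k → 0 < 1 - r ^ k := by
    intro k hk
    have : r ^ k < 1 := pow_lt_one₀ hr0' hr1 (by omega)
    linarith
  have hfnn : ∀ k, 0 ≤ f k := by
    intro k
    by_cases hk : k = 0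
    · simp [hfdef, hk]
    · have hk1 : 1 ≤ k := Nat.one_le_iff_ne_zero.mpr hk
      have hab : b ^ k ≤ a ^ k := pow_le_pow_left₀ hb0 hba k
      have hkpos : (0:ℝ) < k := by exact_mod_cast Nat.pos_of_ne_zero hk
      have : (0:ℝ) < k * (1 - r ^ k) := mul_pos hkpos (hrk k hk1)
      simp only [hfdef, if_neg hk]
      exact div_nonneg (by nlinarith) this.le
  have hfle : ∀ k, f k ≤ (s / (1 - r)) * a ^ k := by
    intro k
    by_cases hk : k = 0
    · simp only [hfdef, hk, if_true, pow_zero, mul_one]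
      have h1r : (0:ℝ) < 1 - r := by linarith
      positivity
    · have hk1 : 1 ≤ k := Nat.one_le_iff_ne_zero.mpr hk
      have hkr : (1:ℝ) - r ≤ k * (1 - r ^ k) := by
        have h1 : r ^ k ≤ r := by
          calc r ^ k ≤ r ^ 1 := pow_le_pow_of_le_one hr0' hr1.le hk1
            _ = r := pow_one r
        have h2 : (1:ℝ) ≤ (k:ℝ) := by exact_mod_cast hk1
        nlinarith [hrk k hk1]
      simp only [hfdef, if_neg hk]
      rw [div_le_iff₀ (by nlinarith [hrk k hk1, (Nat.pos_of_ne_zero hk)]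
        : (0:ℝ) < (k:ℝ) * (1 - r ^ k))]
      have hab : b ^ k ≤ a ^ k := pow_le_pow_left₀ hb0 hba k
      have hbk : 0 ≤ b ^ k := pow_nonneg hb0 k
      have h1r : 0 < 1 - r := by linarith
      calc s * (a ^ k - b ^ k) ≤ s * a ^ k := by nlinarith
        _ = (s / (1 - r)) * a ^ k * (1 - r) := by field_simp
        _ ≤ (s / (1 - r)) * a ^ k * ((k:ℝ) * (1 - r ^ k)) := by
            have : 0 ≤ (s / (1 - r)) * a ^ k := by positivity
            exact mul_le_mul_of_nonneg_left hkr this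
  have hsf : Summable f := by
    refine Summable.of_nonneg_of_le hfnn hfle ?_
    exact (summable_geometric_of_lt_one ha0 ha1).mul_left _
  -- the inner logarithmic sums
  set g : ℕ → ℕ → ℝ :=
    fun j k => if k = 0 then 0 else s * (a ^ k - b ^ k) * (r ^ j) ^ k / k with hgdef
  have hlog : ∀ j : ℕ, HasSum (g j)
      (s * (Real.log (1 - b * r ^ j) - Real.log (1 - a * r ^ j))) := by
    intro j
    have hrj0 : 0 ≤ r ^ j := pow_nonneg hr0' j
    have hart : |a * r ^ j| < 1 := by
      rw [abs_of_nonneg (mul_nonneg ha0 hrj0)]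
      have := (hden j).1; linarith
    have hbrt : |b * r ^ j| < 1 := by
      rw [abs_of_nonneg (mul_nonneg hb0 hrj0)]
      have := (hden j).2; linarith
    have hA := Real.hasSum_pow_div_log_of_abs_lt_one hart
    have hB := Real.hasSum_pow_div_log_of_abs_lt_one hbrt
    have hC := (hA.sub hB).mul_left s
    have hC2 : HasSum (fun i : ℕ => g j (i + 1))
        (s * (Real.log (1 - b * r ^ j) - Real.log (1 - a * r ^ j))) := by
      convert hC using 1
      · rfl
      · funext i
        have hne : i + 1 ≠ 0 := Nat.succ_ne_zero i
        simp only [hgdef, if_neg hne]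
        have hcast : ((i + 1 : ℕ) : ℝ) = (i : ℝ) + 1 := by push_cast; ring
        have h2 : ((i:ℝ) + 1) ≠ 0 := by positivity
        rw [hcast, mul_pow, mul_pow]
        field_simp
      · ring
    have hC3 := (hasSum_nat_add_iff (f := g j) 1).mp hC2
    have hg0 : g j 0 = 0 := by simp [hgdef]
    convert hC3 using 1
    · rfl
    simp [hg0]
  -- pointwise expansion of partial differences
  have hpt : ∀ n k : ℕ, f k - f k * (r ^ n) ^ k = ∑ j ∈ Finset.range n, g j k := by
    intro n k
    by_cases hk : k = 0
    · simp [hfdef, hgdef, hk]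
    · have hk1 : 1 ≤ k := Nat.one_le_iff_ne_zero.mpr hk
      have hrk1 : r ^ k ≠ 1 := by have := hrk k hk1; intro hh; rw [hh] at this; linarith
      have hgeom : ∑ i ∈ Finset.range n, (r ^ k) ^ i = ((r ^ k) ^ n - 1) / (r ^ k - 1) :=
        geom_sum_eq hrk1 n
      have hsum : ∑ j ∈ Finset.range n, g j k
          = (s * (a ^ k - b ^ k) / k) * ∑ i ∈ Finset.range n, (r ^ k) ^ i := by
        rw [Finset.mul_sum]
        refine Finset.sum_congr rfl fun i _ => ?_
        simp only [hgdef, if_neg hk]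
        rw [← pow_mul, ← pow_mul, mul_comm i k]
        ring
      rw [hsum, hgeom]
      simp only [hfdef, if_neg hk]
      have h1 : (0:ℝ) < 1 - r ^ k := hrk k hk1
      have h2 : (k:ℝ) ≠ 0 := by
        exact_mod_cast Nat.pos_of_ne_zero hk |>.ne'
      have h3 : r ^ k - 1 ≠ 0 := by intro hh; rw [sub_eq_zero] at hh; exact hrk1 hh
      have h4 : (1:ℝ) - r ^ k ≠ 0 := h1.ne'
      rw [← pow_mul, ← pow_mul, mul_comm n k]
      field_simp
      ring
  -- summability of the g j
  have hgsum : ∀ j, Summable (g j) := fun j => (hlog j).summable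
  have hFt : ∀ t : ℝ, 0 ≤ t → t ≤ 1 → Summable (fun k => f k * t ^ k) :=
    fun t ht0 ht1 => summable_geom_aux hfnn hsf ht0 ht1
  -- the main telescoping identity
  have hkey : ∀ n : ℕ, (∑' k, f k) - (∑' k, f k * (r ^ n) ^ k)
      = s * ∑ j ∈ Finset.range n, (Real.log (1 - b * r ^ j) - Real.log (1 - a * r ^ j)) := by
    intro n
    have hrn0 : 0 ≤ r ^ n := pow_nonneg hr0' n
    have hrn1 : r ^ n ≤ 1 := pow_le_one₀ hr0' hr1.le
    have h1 : (∑' k, f k) - (∑' k, f k * (r ^ n) ^ k)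
        = ∑' k, (f k - f k * (r ^ n) ^ k) := (Summable.tsum_sub hsf (hFt _ hrn0 hrn1)).symm
    rw [h1]
    have h2 : ∑' k, (f k - f k * (r ^ n) ^ k) = ∑' k, ∑ j ∈ Finset.range n, g j k :=
      tsum_congr fun k => hpt n k
    rw [h2, Summable.tsum_finsetSum (fun j _ => hgsum j), Finset.mul_sum]
    exact Finset.sum_congr rfl fun j _ => (hlog j).tsum_eq
  -- define the coefficients
  refine ⟨fun m => Real.exp (-(∑' k, f k)) * bcoef f m,
    fun m => mul_nonneg (Real.exp_nonneg _) (bcoef_nonneg hfnn hsf m), ?_, ?_⟩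
  · have hb1 := hasSum_bcoef hfnn hsf (zero_le_one) (le_refl (1:ℝ))
    simp only [one_pow, mul_one] at hb1
    exact hb1.summable.mul_left _
  · intro n
    have hrn0 : 0 ≤ r ^ n := pow_nonneg hr0' n
    have hrn1 : r ^ n ≤ 1 := pow_le_one₀ hr0' hr1.le
    have hb := hasSum_bcoef hfnn hsf hrn0 hrn1
    -- compute the product as an exponential
    have hprod : (∏ j ∈ Finset.range n, ((1 - a * r ^ j) / (1 - b * r ^ j)) ^ s)
        = Real.exp ((∑' k, f k * (r ^ n) ^ k) - (∑' k, f k)) := by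
      have h1 : ∀ j ∈ Finset.range n, ((1 - a * r ^ j) / (1 - b * r ^ j)) ^ s
          = Real.exp (s * (Real.log (1 - a * r ^ j) - Real.log (1 - b * r ^ j))) := by
        intro j _
        have hdj := hden j
        rw [Real.rpow_def_of_pos (div_pos hdj.1 hdj.2), Real.log_div hdj.1.ne' hdj.2.ne']
        ring_nf
      rw [Finset.prod_congr rfl h1, ← Real.exp_sum]
      congr 1
      have h3 : ∑ j ∈ Finset.range n, s * (Real.log (1 - a * r ^ j) - Real.log (1 - b * r ^ j))
          = -(s * ∑ j ∈ Finset.range n,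
              (Real.log (1 - b * r ^ j) - Real.log (1 - a * r ^ j))) := by
        rw [Finset.mul_sum, ← Finset.sum_neg_distrib]
        exact Finset.sum_congr rfl fun j _ => by ring
      rw [h3, ← hkey n]
      ring
    rw [hprod]
    have h4 : ∑' m, (Real.exp (-(∑' k, f k)) * bcoef f m) * (r ^ m) ^ n
        = Real.exp (-(∑' k, f k)) * ∑' m, bcoef f m * (r ^ n) ^ m := by
      rw [← tsum_mul_left]
      exact tsum_congr fun m => by rw [← pow_mul, mul_comm m n, pow_mul]; ring
    rw [h4, hb.tsum_eq, ← Real.exp_add]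
    congr 1
    ring

/-! ### Multiplying a subnormal weight by a weight with geometric-atomic moments -/

lemma isSubnormal_mul {u v : ℕ → ℝ} (hu : IsSubnormalWeight u)
    (hv0 : ∀ n, 0 < v n) (hv1 : ∀ n, v n ≤ 1)
    {r : ℝ} (hr0 : 0 < r) (hr1 : r ≤ 1) {c : ℕ → ℝ}
    (hc0 : ∀ m, 0 ≤ c m) (hcs : Summable c)
    (hmom : ∀ n, moments v n = ∑' m, c m * (r ^ m) ^ n) :
    IsSubnormalWeight (fun n => u n * v n) := by
  obtain ⟨hu0, ⟨C, hC⟩, μ, hfin, ⟨K, hKc, hK0, hKnull⟩, hmomu⟩ := hu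
  -- bound for K
  obtain ⟨R₀, hR₀⟩ := hKc.isBounded.subset_closedBall 0
  set R : ℝ := max R₀ 1 with hRdef
  have hR1 : (1:ℝ) ≤ R := le_max_right _ _
  have hR0 : (0:ℝ) ≤ R := by linarith
  have hKR : K ⊆ Set.Icc 0 R := by
    intro x hx
    have h1 := hK0 hx
    have h2 := hR₀ hx
    rw [Metric.mem_closedBall, Real.dist_eq, sub_zero] at h2
    exact ⟨h1, (le_abs_self x).trans (h2.trans (le_max_left _ _))⟩
  -- the new measure
  set T : ℕ → ℝ → ℝ := fun m x => r ^ m * x with hTdef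
  have hTmeas : ∀ m, Measurable (T m) := fun m => (measurable_const_mul _)
  set μ' : Measure ℝ := Measure.sum (fun m => ((c m).toNNReal : ℝ≥0∞) • μ.map (T m)) with hμ'def
  have hμ'apply : ∀ s : Set ℝ, MeasurableSet s →
      μ' s = ∑' m, ENNReal.ofReal (c m) * μ ((T m) ⁻¹' s) := by
    intro s hsm
    rw [hμ'def, Measure.sum_apply _ hsm]
    refine tsum_congr fun m => ?_
    rw [Measure.smul_apply, Measure.map_apply (hTmeas m) hsm, smul_eq_mul,
      ENNReal.ofReal]
  -- the complement of [0, R] is null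
  have hnull : μ' (Set.Icc 0 R)ᶜ = 0 := by
    rw [hμ'apply _ measurableSet_Icc.compl]
    have : ∀ m, μ ((T m) ⁻¹' (Set.Icc 0 R)ᶜ) = 0 := by
      intro m
      refine measure_mono_null ?_ hKnull
      intro x hx
      simp only [Set.mem_preimage, Set.mem_compl_iff] at hx ⊢
      intro hxK
      obtain ⟨hx0, hxR⟩ := hKR hxK
      refine hx ⟨mul_nonneg (pow_nonneg hr0.le m) hx0, ?_⟩
      calc r ^ m * x ≤ 1 * x := by
            exact mul_le_mul_of_nonneg_right (pow_le_one₀ hr0.le hr1) hx0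
        _ = x := one_mul x
        _ ≤ R := hxR
    exact (tsum_congr fun m => by rw [this m, mul_zero]).trans tsum_zero
  have haeIcc : ∀ᵐ x ∂μ', x ∈ Set.Icc 0 R := ae_iff.mpr hnull
  have haeIccμ : ∀ᵐ x ∂μ, x ∈ Set.Icc 0 R := by
    refine ae_iff.mpr (measure_mono_null ?_ hKnull)
    intro x hx
    simp only [Set.mem_setOf_eq] at hx
    exact fun hxK => hx (hKR hxK)
  -- basic lintegrals
  set I : ℕ → ℝ≥0∞ := fun n => ∫⁻ x, ENNReal.ofReal (x ^ n) ∂μ with hIdef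
  have hIfin : ∀ n, I n ≤ ENNReal.ofReal (R ^ n) * μ Set.univ := by
    intro n
    rw [hIdef, ← lintegral_const]
    refine lintegral_mono_ae (haeIccμ.mono fun x hx => ?_)
    exact ENNReal.ofReal_le_ofReal (pow_le_pow_left₀ hx.1 hx.2 n)
  have hIne : ∀ n, I n ≠ ∞ := by
    intro n
    refine ne_top_of_le_ne_top ?_ (hIfin n)
    exact ENNReal.mul_ne_top ENNReal.ofReal_ne_top (measure_ne_top μ _)
  have hInt : ∀ n, moments u n = (I n).toReal := by
    intro n
    rw [hmomu n]
    rw [integral_eq_lintegral_of_nonneg_ae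
      (haeIccμ.mono fun x hx => pow_nonneg hx.1 n)
      ((continuous_pow n).aestronglyMeasurable)]
  -- the lintegral against μ'
  have hmeaspow : ∀ n : ℕ, Measurable fun x : ℝ => ENNReal.ofReal (x ^ n) :=
    fun n => ENNReal.measurable_ofReal.comp (measurable_id.pow_const n)
  have hlint : ∀ n : ℕ, ∫⁻ x, ENNReal.ofReal (x ^ n) ∂μ'
      = ∑' m, ENNReal.ofReal (c m) * (ENNReal.ofReal ((r ^ m) ^ n) * I n) := by
    intro n
    rw [hμ'def, lintegral_sum_measure]
    refine tsum_congr fun m => ?_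
    rw [lintegral_smul_measure, lintegral_map (hmeaspow n) (hTmeas m)]
    have : ∀ x : ℝ, ENNReal.ofReal ((T m x) ^ n)
        = ENNReal.ofReal ((r ^ m) ^ n) * ENNReal.ofReal (x ^ n) := by
      intro x
      rw [hTdef]
      simp only
      rw [mul_pow, ENNReal.ofReal_mul (by positivity)]
    simp_rw [this]
    rw [lintegral_const_mul _ (hmeaspow n)]
    rfl
  -- moments of the product
  have hmoments : ∀ n, moments (fun k => u k * v k) n = moments u n * moments v n := by
    intro n
    rw [moments, moments, moments, ← Finset.prod_mul_distrib]
    exact Finset.prod_congr rfl fun j _ => mul_pow _ _ _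
  refine ⟨fun n => mul_pos (hu0 n) (hv0 n), ⟨max C 0, fun n => ?_⟩, μ', ?_, ?_, ?_⟩
  · calc u n * v n ≤ u n * 1 := mul_le_mul_of_nonneg_left (hv1 n) (hu0 n).le
      _ = u n := mul_one _
      _ ≤ C := hC n
      _ ≤ max C 0 := le_max_left _ _
  · -- finiteness
    constructor
    rw [hμ'apply _ MeasurableSet.univ]
    have h1 : ∀ m, ENNReal.ofReal (c m) * μ ((T m) ⁻¹' Set.univ)
        ≤ ENNReal.ofReal (c m) * μ Set.univ := by
      intro m; simp
    calc ∑' m, ENNReal.ofReal (c m) * μ ((T m) ⁻¹' Set.univ)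
        ≤ ∑' m, ENNReal.ofReal (c m) * μ Set.univ := ENNReal.tsum_le_tsum h1
      _ = (∑' m, ENNReal.ofReal (c m)) * μ Set.univ := ENNReal.tsum_mul_right
      _ = ENNReal.ofReal (∑' m, c m) * μ Set.univ := by
          rw [ENNReal.ofReal_tsum_of_nonneg hc0 hcs]
      _ < ∞ := ENNReal.mul_lt_top ENNReal.ofReal_lt_top (measure_lt_top μ _)
  · exact ⟨Set.Icc 0 R, isCompact_Icc, fun x hx => hx.1, hnull⟩
  · intro n
    have hae' : 0 ≤ᵐ[μ'] fun x : ℝ => x ^ n :=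
      haeIcc.mono fun x hx => pow_nonneg hx.1 n
    rw [integral_eq_lintegral_of_nonneg_ae hae' ((continuous_pow n).aestronglyMeasurable),
      hlint n]
    have hterm : ∀ m, (ENNReal.ofReal (c m) * (ENNReal.ofReal ((r ^ m) ^ n) * I n)) ≠ ∞ :=
      fun m => ENNReal.mul_ne_top ENNReal.ofReal_ne_top
        (ENNReal.mul_ne_top ENNReal.ofReal_ne_top (hIne n))
    rw [ENNReal.tsum_toReal_eq hterm]
    have htoReal : ∀ m, (ENNReal.ofReal (c m) * (ENNReal.ofReal ((r ^ m) ^ n) * I n)).toReal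
        = c m * (r ^ m) ^ n * (I n).toReal := by
      intro m
      rw [ENNReal.toReal_mul, ENNReal.toReal_mul, ENNReal.toReal_ofReal (hc0 m),
        ENNReal.toReal_ofReal (by positivity)]
      ring
    rw [tsum_congr htoReal, tsum_mul_right, hmoments n, hInt n, hmom n]
    ring

end ShadowAux

/-- Theorem 3.1(2), central reversed shadow. -/
theorem midSubord_central_reversed_shadow (p N D M P : ℝ) (hp : 1 < p)
    (hN : -1 < N) (hN' : N < 1) (hD : -1 < D) (hD' : D < 1)
    (hM : -1 < M) (hM' : M < 1) (hP : -1 < P) (hP' : P < 1)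
    (h : MIDSubord p N D M P) (habs : |P| ≤ |M|) :
    MIDSubord p N D (-P) (-M) := by
  intro s hs
  have hp0 : (0:ℝ) < p := by linarith
  have hpow : ∀ n : ℕ, (1:ℝ) ≤ p ^ n := fun n => one_le_pow₀ hp.le
  have hposX : ∀ (X : ℝ), -1 < X → ∀ n : ℕ, 0 < p ^ n + X := by
    intro X hX n
    have := hpow n
    linarith
  have hgrws_pos : ∀ (A B : ℝ), -1 < A → -1 < B → ∀ n, 0 < grws p A B n := by
    intro A B hA hB n
    exact Real.sqrt_pos.mpr (div_pos (hposX A hA n) (hposX B hB n))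
  have hMP : ∀ n, 0 < grws p M P n := hgrws_pos M P hM hP
  have hPM : ∀ n, 0 < grws p (-P) (-M) n :=
    hgrws_pos (-P) (-M) (by linarith) (by linarith)
  have hND : ∀ n, 0 < grws p N D n := hgrws_pos N D hN hD
  -- basic parameters
  set r : ℝ := (p ^ (2:ℕ))⁻¹ with hrdef
  have hp2 : (1:ℝ) < p ^ (2:ℕ) := one_lt_pow₀ hp (by norm_num)
  have hr0 : 0 < r := by rw [hrdef]; positivity
  have hr1 : r < 1 := by
    rw [hrdef, inv_lt_one₀ (by linarith)]
    exact hp2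
  have hb0 : (0:ℝ) ≤ P ^ 2 := sq_nonneg P
  have hba : P ^ 2 ≤ M ^ 2 := by
    have := pow_le_pow_left₀ (abs_nonneg P) habs 2
    rwa [sq_abs, sq_abs] at this
  have ha1 : M ^ 2 < 1 := by
    have h1 : |M| < 1 := abs_lt.mpr ⟨hM, hM'⟩
    have := pow_lt_one₀ (abs_nonneg M) h1 (two_ne_zero)
    rwa [sq_abs] at this
  -- the squared shadow quotient is a geometric ratio
  have hbase_sq : ∀ j : ℕ, (grws p M P j / grws p (-P) (-M) j)
      = Real.sqrt ((1 - M ^ 2 * r ^ j) / (1 - P ^ 2 * r ^ j)) := by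
    intro j
    have hx := hpow j
    have hxM : 0 < p ^ j - M := by linarith
    have hxP : 0 < p ^ j - P := by linarith
    have hxM' : 0 < p ^ j + M := hposX M hM j
    have hxP' : 0 < p ^ j + P := hposX P hP j
    have ht1 : r ^ j * (p ^ j) ^ (2:ℕ) = 1 := by
      rw [hrdef, inv_pow, ← pow_right_comm]
      exact inv_mul_cancel₀ (by positivity)
    have harg : ((p ^ j + M) / (p ^ j + P)) / ((p ^ j - P) / (p ^ j - M))
        = (1 - M ^ 2 * r ^ j) / (1 - P ^ 2 * r ^ j) := by
      have hnum : 1 - M ^ 2 * r ^ j = r ^ j * ((p ^ j) ^ (2:ℕ) - M ^ 2) := by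
        rw [mul_sub, ht1]; ring
      have hden : 1 - P ^ 2 * r ^ j = r ^ j * ((p ^ j) ^ (2:ℕ) - P ^ 2) := by
        rw [mul_sub, ht1]; ring
      rw [hnum, hden, mul_div_mul_left _ _ (by positivity : (r:ℝ) ^ j ≠ 0)]
      have h1 : p ^ j + P ≠ 0 := hxP'.ne'
      have h2 : p ^ j - P ≠ 0 := hxP.ne'
      have h3 : p ^ j - M ≠ 0 := hxM.ne'
      have h4 : (p ^ j) ^ (2:ℕ) - P ^ 2 ≠ 0 := by nlinarith
      field_simp
      ring
    rw [grws, grws, ← Real.sqrt_div (by positivity)]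
    rw [show p ^ j + -P = p ^ j - P from by ring, show p ^ j + -M = p ^ j - M from by ring, harg]
  -- bounds on the basic ratio
  have hratio_pos : ∀ j : ℕ, 0 < (1 - M ^ 2 * r ^ j) / (1 - P ^ 2 * r ^ j) := by
    intro j
    have hrj1 : r ^ j ≤ 1 := pow_le_one₀ hr0.le hr1.le
    have hrj0 : 0 ≤ r ^ j := pow_nonneg hr0.le j
    have h1 : M ^ 2 * r ^ j < 1 := by nlinarith
    have h2 : P ^ 2 * r ^ j ≤ M ^ 2 * r ^ j := by nlinarith
    exact div_pos (by linarith) (by linarith)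
  have hratio_le : ∀ j : ℕ, (1 - M ^ 2 * r ^ j) / (1 - P ^ 2 * r ^ j) ≤ 1 := by
    intro j
    have hrj1 : r ^ j ≤ 1 := pow_le_one₀ hr0.le hr1.le
    have hrj0 : 0 ≤ r ^ j := pow_nonneg hr0.le j
    have h1 : M ^ 2 * r ^ j < 1 := by nlinarith
    have h2 : P ^ 2 * r ^ j ≤ M ^ 2 * r ^ j := by nlinarith
    rw [div_le_one (by linarith)]
    linarith
  -- the shadow factor
  set v : ℕ → ℝ := fun n => (grws p M P n / grws p (-P) (-M) n) ^ s with hvdef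
  have hv0 : ∀ n, 0 < v n := fun n =>
    Real.rpow_pos_of_pos (div_pos (hMP n) (hPM n)) s
  have hv1 : ∀ n, v n ≤ 1 := by
    intro n
    refine Real.rpow_le_one (div_pos (hMP n) (hPM n)).le ?_ hs.le
    rw [hbase_sq n]
    exact Real.sqrt_le_one.mpr (hratio_le n)
  -- moments of the shadow factor
  obtain ⟨c, hc0, hcs, hcmom⟩ :=
    ShadowAux.core_moments (M ^ 2) (P ^ 2) r s hb0 hba ha1 hr0 hr1 hs
  have hmomv : ∀ n, moments v n = ∑' m, c m * (r ^ m) ^ n := by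
    intro n
    rw [← hcmom n, moments]
    refine Finset.prod_congr rfl fun j _ => ?_
    have hbj : 0 ≤ grws p M P j / grws p (-P) (-M) j := (div_pos (hMP j) (hPM j)).le
    have h2 : (v j) ^ (2:ℕ)
        = ((grws p M P j / grws p (-P) (-M) j) ^ (2:ℕ)) ^ s := by
      rw [hvdef]
      simp only
      rw [← Real.rpow_natCast ((grws p M P j / grws p (-P) (-M) j) ^ s) 2,
        ← Real.rpow_mul hbj, mul_comm, Real.rpow_mul hbj, Real.rpow_natCast]
    rw [h2, hbase_sq j, Real.sq_sqrt (hratio_pos j).le]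
  -- assemble
  have hfun : (fun n => (grws p N D n / grws p (-P) (-M) n) ^ s)
      = fun n => ((grws p N D n / grws p M P n) ^ s) * v n := by
    funext n
    rw [hvdef]
    simp only
    rw [← Real.mul_rpow (div_nonneg (hND n).le (hMP n).le) (div_nonneg (hMP n).le (hPM n).le)]
    congr 1
    rw [div_mul_div_comm, mul_comm (grws p N D n) (grws p M P n),
      mul_div_mul_left _ _ (hMP n).ne']
  rw [hfun]
  exact ShadowAux.isSubnormal_mul (h s hs) hv0 hv1 hr0 hr1.le hc0 hcs hmomv
end

section
/- (Theorem 3.1(3a), NW-SE shadow.) Fix p > 1 and let (N,D), (M,P) lie in the open square (−1,1)×(−1,1). If (N,D) ≫ (M,P), M ≤ 0 and P ≥ 0, then (N,D) ≫ (−M,−P). -/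
open MeasureTheory

theorem isSubnormal_mul {u v : ℕ → ℝ} (hu : IsSubnormalWeight u) (hv : IsSubnormalWeight v) :
    IsSubnormalWeight (fun n => u n * v n) := by
  obtain ⟨hu0, ⟨Cu, hCu⟩, μ, hμfin, ⟨K1, hK1c, hK1i, hK1n⟩, hμm⟩ := hu
  obtain ⟨hv0, ⟨Cv, hCv⟩, ν, hνfin, ⟨K2, hK2c, hK2i, hK2n⟩, hνm⟩ := hv
  haveI := hμfin; haveI := hνfin
  have hmeas : Measurable (fun z : ℝ × ℝ => z.1 * z.2) := measurable_fst.mul measurable_snd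
  have hKc : IsCompact ((fun z : ℝ × ℝ => z.1 * z.2) '' (K1 ×ˢ K2)) :=
    (hK1c.prod hK2c).image (continuous_fst.mul continuous_snd)
  refine ⟨fun n => mul_pos (hu0 n) (hv0 n),
    ⟨Cu * Cv, fun n => mul_le_mul (hCu n) (hCv n) (hv0 n).le ((hu0 n).le.trans (hCu n))⟩,
    (μ.prod ν).map (fun z : ℝ × ℝ => z.1 * z.2), ?_,
    ⟨(fun z : ℝ × ℝ => z.1 * z.2) '' (K1 ×ˢ K2), hKc, ?_, ?_⟩, ?_⟩
  · constructor
    rw [Measure.map_apply hmeas MeasurableSet.univ]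
    exact measure_lt_top _ _
  · rintro x ⟨⟨x1, x2⟩, ⟨h1, h2⟩, rfl⟩
    exact mul_nonneg (hK1i h1) (Set.mem_Ici.1 (hK2i h2))
  · rw [Measure.map_apply hmeas hKc.isClosed.measurableSet.compl]
    have hsub : (fun z : ℝ × ℝ => z.1 * z.2) ⁻¹' ((fun z : ℝ × ℝ => z.1 * z.2) '' (K1 ×ˢ K2))ᶜ ⊆
        (K1ᶜ ×ˢ (Set.univ : Set ℝ)) ∪ ((Set.univ : Set ℝ) ×ˢ K2ᶜ) := by
      intro z hz
      simp only [Set.mem_preimage, Set.mem_compl_iff] at hz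
      rcases Classical.em (z.1 ∈ K1) with h1 | h1
      · rcases Classical.em (z.2 ∈ K2) with h2 | h2
        · exact absurd (Set.mem_image_of_mem _ (Set.mk_mem_prod h1 h2)) hz
        · exact Or.inr ⟨trivial, h2⟩
      · exact Or.inl ⟨h1, trivial⟩
    refine measure_mono_null hsub ?_
    refine measure_union_null ?_ ?_
    · rw [Measure.prod_prod, hK1n, zero_mul]
    · rw [Measure.prod_prod, hK2n, mul_zero]
  · intro n
    have hm : moments (fun n => u n * v n) n = moments u n * moments v n := by
      simp [moments, mul_pow, Finset.prod_mul_distrib]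
    rw [hm, hμm n, hνm n,
      integral_map hmeas.aemeasurable (continuous_pow n).aestronglyMeasurable]
    simp_rw [mul_pow]
    exact (integral_prod_mul (μ := μ) (ν := ν) (fun x : ℝ => x ^ n) (fun y : ℝ => y ^ n)).symm

noncomputable def ee (p a : ℝ) (k : ℕ) : ℝ :=
  2 / (2 * k + 1) * (a ^ (2 * k + 1) / (1 - (p⁻¹) ^ (2 * k + 1)))

noncomputable def EE (p a x : ℝ) : ℝ := ∑' k, ee p a k * x ^ (2 * k + 1)

section
variable {p a : ℝ} (hp : 1 < p) (ha0 : 0 ≤ a) (ha1 : a < 1)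
include hp

lemma q_pos : 0 < p⁻¹ := inv_pos.2 (lt_trans one_pos hp)
lemma q_lt_one : p⁻¹ < 1 := inv_lt_one_of_one_lt₀ hp
lemma qpow_lt_one (k : ℕ) : (p⁻¹) ^ (2 * k + 1) < 1 :=
  pow_lt_one₀ (q_pos hp).le (q_lt_one hp) (Nat.succ_ne_zero _)

include ha0 in
lemma ee_nonneg (k : ℕ) : 0 ≤ ee p a k := by
  have h1 : (0:ℝ) < 1 - (p⁻¹) ^ (2 * k + 1) := by linarith [qpow_lt_one hp k]
  have h2 : (0:ℝ) < 2 * (k:ℝ) + 1 := by positivity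
  unfold ee; positivity

include ha0 ha1 in
lemma summable_ee {x : ℝ} (hx0 : 0 ≤ x) (hx1 : x ≤ 1) :
    Summable (fun k => ee p a k * x ^ (2 * k + 1)) := by
  have hq0 := q_pos hp
  have hq1 := q_lt_one hp
  have hb : Summable (fun k : ℕ => (2 / (1 - p⁻¹) * a) * (a ^ 2) ^ k) :=
    (summable_geometric_of_lt_one (by positivity) (by nlinarith)).mul_left _
  refine Summable.of_nonneg_of_le
    (fun k => mul_nonneg (ee_nonneg hp ha0 k) (pow_nonneg hx0 _)) (fun k => ?_) hb
  have h1 : (0:ℝ) < 1 - (p⁻¹) ^ (2 * k + 1) := by linarith [qpow_lt_one hp k]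
  have hle : (p⁻¹) ^ (2 * k + 1) ≤ p⁻¹ := by
    have := pow_le_pow_of_le_one hq0.le hq1.le (show 1 ≤ 2 * k + 1 by omega) (a := p⁻¹)
    rwa [pow_one] at this
  have h1' : 1 - p⁻¹ ≤ 1 - (p⁻¹) ^ (2 * k + 1) := by linarith
  have h2 : (0:ℝ) < 2 * (k:ℝ) + 1 := by positivity
  have hxp : x ^ (2 * k + 1) ≤ 1 := pow_le_one₀ hx0 hx1
  have ha' : a ^ (2 * k + 1) = a * (a ^ 2) ^ k := by
    rw [← pow_mul, ← pow_succ']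
  calc ee p a k * x ^ (2 * k + 1) ≤ ee p a k * 1 := by
        have h := ee_nonneg hp ha0 (a := a) k
        have := pow_le_one₀ hx0 hx1 (n := 2 * k + 1)
        nlinarith
    _ = ee p a k := mul_one _
    _ ≤ 2 * (a ^ (2 * k + 1) / (1 - p⁻¹)) := by
        unfold ee
        apply mul_le_mul
        · apply div_le_self (by norm_num)
          have : (0:ℝ) ≤ (k:ℝ) := Nat.cast_nonneg k
          linarith
        · exact div_le_div_of_nonneg_left (by positivity) (by linarith) h1'
        · positivity
        · norm_num
    _ = 2 / (1 - p⁻¹) * a * (a ^ 2) ^ k := by rw [ha']; ring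

end

lemma hasSum_artanh {y : ℝ} (hy : |y| < 1) :
    HasSum (fun k : ℕ => 2 / (2 * (k:ℝ) + 1) * y ^ (2 * k + 1))
      (Real.log (1 + y) - Real.log (1 - y)) := by
  have h1 := Real.hasSum_pow_div_log_of_abs_lt_one hy
  have h2 := Real.hasSum_pow_div_log_of_abs_lt_one (x := -y) (by rwa [abs_neg])
  have h3 := h1.sub h2
  rw [sub_neg_eq_add] at h2
  have h3 : HasSum (fun n : ℕ => y ^ (n + 1) / (n + 1) - (-y) ^ (n + 1) / (n + 1))
      (Real.log (1 + y) - Real.log (1 - y)) := by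
    have := h1.sub h2
    rw [show Real.log (1 + y) - Real.log (1 - y) = -Real.log (1 - y) - -Real.log (1 + y) by ring]
    exact this
  have hinj : Function.Injective (fun k : ℕ => 2 * k) := fun a b h => by dsimp at h; omega
  have hzero : ∀ n, n ∉ Set.range (fun k : ℕ => 2 * k) →
      y ^ (n + 1) / (n + 1) - (-y) ^ (n + 1) / (n + 1) = 0 := by
    intro n hn
    have hodd : Odd n := by
      rcases Nat.even_or_odd n with he | ho
      · obtain ⟨r, rfl⟩ := he
        exact absurd ⟨r, by dsimp; omega⟩ hn
      · exact ho
    have : Even (n + 1) := Odd.add_one hodd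
    rw [this.neg_pow, sub_self]
  have h4 := (hinj.hasSum_iff hzero).2 h3
  refine h4.congr_fun fun k => ?_
  have hodd : Odd (2 * k + 1) := ⟨k, by ring⟩
  simp only [Function.comp]
  rw [hodd.neg_pow]
  push_cast
  ring

section
variable {p a : ℝ} (hp : 1 < p) (ha0 : 0 ≤ a) (ha1 : a < 1)
include hp ha0 ha1

lemma EE_identity (n : ℕ) :
    EE p a 1 - EE p a ((p⁻¹) ^ n) =
      ∑ j ∈ Finset.range n, (Real.log (1 + a * p⁻¹ ^ j) - Real.log (1 - a * p⁻¹ ^ j)) := by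
  have hq0 := q_pos hp
  have hq1 := q_lt_one hp
  have hqn0 : (0:ℝ) ≤ (p⁻¹) ^ n := by positivity
  have hqn1 : (p⁻¹) ^ n ≤ 1 := pow_le_one₀ hq0.le hq1.le
  have S1 := summable_ee hp ha0 ha1 zero_le_one le_rfl
  have S2 := summable_ee hp ha0 ha1 hqn0 hqn1
  have hy : ∀ j : ℕ, |a * p⁻¹ ^ j| < 1 := by
    intro j
    rw [abs_of_nonneg (by positivity)]
    calc a * p⁻¹ ^ j ≤ a * 1 := by
          gcongr
          exact pow_le_one₀ hq0.le hq1.le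
      _ < 1 := by rw [mul_one]; exact ha1
  have hsub : EE p a 1 - EE p a ((p⁻¹) ^ n)
      = ∑' k, (ee p a k * 1 ^ (2 * k + 1) - ee p a k * ((p⁻¹) ^ n) ^ (2 * k + 1)) :=
    (Summable.tsum_sub S1 S2).symm
  rw [hsub]
  have key : ∀ k : ℕ, ee p a k * 1 ^ (2 * k + 1) - ee p a k * ((p⁻¹) ^ n) ^ (2 * k + 1)
      = ∑ j ∈ Finset.range n, (2 / (2 * (k:ℝ) + 1) * (a * p⁻¹ ^ j) ^ (2 * k + 1)) := by
    intro k
    have hlt := qpow_lt_one hp k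
    have h1 : ((p⁻¹:ℝ)) ^ (2 * k + 1) ≠ 1 := hlt.ne
    have hne : (1:ℝ) - (p⁻¹) ^ (2 * k + 1) ≠ 0 := by
      have : (0:ℝ) < 1 - (p⁻¹) ^ (2 * k + 1) := by linarith
      exact this.ne'
    have hcast : (2 * (k:ℝ) + 1) ≠ 0 := by positivity
    have hrw : ∀ j : ℕ, (a * p⁻¹ ^ j) ^ (2 * k + 1)
        = a ^ (2 * k + 1) * ((p⁻¹ ^ (2 * k + 1))) ^ j := by
      intro j
      rw [mul_pow, pow_right_comm]
    simp_rw [hrw]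
    rw [← Finset.mul_sum, ← Finset.mul_sum, geom_sum_eq h1]
    have hnn : ((p⁻¹ : ℝ) ^ n) ^ (2 * k + 1) = ((p⁻¹) ^ (2 * k + 1)) ^ n := pow_right_comm _ _ _
    rw [hnn, one_pow, mul_one]
    have hflip : (((p⁻¹:ℝ) ^ (2 * k + 1)) ^ n - 1) / ((p⁻¹) ^ (2 * k + 1) - 1)
        = (1 - ((p⁻¹) ^ (2 * k + 1)) ^ n) / (1 - (p⁻¹) ^ (2 * k + 1)) := by
      rw [← neg_sub (1:ℝ) (((p⁻¹) ^ (2 * k + 1)) ^ n), ← neg_sub (1:ℝ) ((p⁻¹) ^ (2 * k + 1)),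
        neg_div_neg_eq]
    rw [hflip]
    unfold ee
    rw [← mul_one_sub, mul_assoc, div_mul_eq_mul_div, mul_div_assoc]
    ring
  rw [tsum_congr key, Summable.tsum_finsetSum (fun j _ => (hasSum_artanh (hy j)).summable)]
  refine Finset.sum_congr rfl fun j _ => ?_
  exact (hasSum_artanh (hy j)).tsum_eq

end

open scoped ENNReal in
lemma tsum_pi_fin (F : ℕ → ℝ≥0∞) : ∀ l : ℕ,
    ∑' m : Fin l → ℕ, ∏ i, F (m i) = (∑' k, F k) ^ l := by
  intro l
  induction l with
  | zero =>
    rw [pow_zero, tsum_eq_single (fun i : Fin 0 => i.elim0)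
      (fun b hb => absurd (Subsingleton.elim b _) hb)]
    simp
  | succ l ih =>
    have he := (Fin.consEquiv (fun _ : Fin (l+1) => ℕ)).tsum_eq
      (f := fun m : Fin (l+1) → ℕ => ∏ i, F (m i))
    rw [← he]
    have hterm : ∀ x : ℕ × (Fin l → ℕ),
        (∏ i, F ((Fin.consEquiv (fun _ : Fin (l+1) => ℕ)) x i)) = F x.1 * ∏ i, F (x.2 i) := by
      rintro ⟨k, m⟩
      have hc : ((Fin.consEquiv (fun _ : Fin (l+1) => ℕ)) (k, m)) = Fin.cons k m := rfl
      rw [hc]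
      rw [Fin.prod_univ_succ]; simp
    rw [tsum_congr hterm, ENNReal.tsum_prod']
    simp_rw [ENNReal.tsum_mul_left]
    rw [ih, ENNReal.tsum_mul_right, pow_succ, mul_comm]

open scoped ENNReal

theorem isSubnormal_T {p a : ℝ} (s : ℝ) (hp : 1 < p) (ha0 : 0 ≤ a) (ha1 : a < 1) (hs : 0 < s) :
    IsSubnormalWeight (fun n => (Real.sqrt ((p ^ n - a) / (p ^ n + a))) ^ s) := by
  have hp0 : (0:ℝ) < p := lt_trans one_pos hp
  have hq0 := q_pos hp
  have hq1 := q_lt_one hp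
  have hpn : ∀ n : ℕ, 1 ≤ p ^ n := fun n => one_le_pow₀ hp.le
  have hpna : ∀ n : ℕ, 0 < p ^ n - a := fun n => by linarith [hpn n]
  have hpna' : ∀ n : ℕ, 0 < p ^ n + a := fun n => by linarith [hpn n]
  have hbase : ∀ n : ℕ, 0 < (p ^ n - a) / (p ^ n + a) := fun n => div_pos (hpna n) (hpna' n)
  have hqn0 : ∀ n : ℕ, (0:ℝ) ≤ (p⁻¹) ^ n := fun n => by positivity
  have hqn1 : ∀ n : ℕ, (p⁻¹ : ℝ) ^ n ≤ 1 := fun n => pow_le_one₀ hq0.le hq1.le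
  have haq1 : ∀ j : ℕ, a * p⁻¹ ^ j < 1 := by
    intro j
    calc a * p⁻¹ ^ j ≤ a * 1 := by gcongr; exact hqn1 j
      _ < 1 := by rw [mul_one]; exact ha1
  have haq0 : ∀ j : ℕ, 0 ≤ a * p⁻¹ ^ j := fun j => mul_nonneg ha0 (hqn0 j)
  have h1m : ∀ j : ℕ, 0 < 1 - a * p⁻¹ ^ j := fun j => by linarith [haq1 j]
  have h1p : ∀ j : ℕ, 0 < 1 + a * p⁻¹ ^ j := fun j => by linarith [haq0 j]
  have hbase_eq : ∀ j : ℕ, (p ^ j - a) / (p ^ j + a)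
      = (1 - a * p⁻¹ ^ j) / (1 + a * p⁻¹ ^ j) := by
    intro j
    have hj : (p:ℝ) ^ j ≠ 0 := (pow_pos hp0 j).ne'
    rw [inv_pow, div_eq_div_iff (hpna' j).ne' (show (1:ℝ) + a * ((p:ℝ) ^ j)⁻¹ ≠ 0 by rw [← inv_pow]; exact (h1p j).ne')]
    field_simp
  -- the moment sequence
  have hmom : ∀ n : ℕ, moments (fun n => (Real.sqrt ((p ^ n - a) / (p ^ n + a))) ^ s) n
      = Real.exp (s * EE p a ((p⁻¹) ^ n) - s * EE p a 1) := by
    intro n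
    have hfac : ∀ j : ℕ, ((Real.sqrt ((p ^ j - a) / (p ^ j + a))) ^ s) ^ 2
        = Real.exp (-(s * (Real.log (1 + a * p⁻¹ ^ j) - Real.log (1 - a * p⁻¹ ^ j)))) := by
      intro j
      have hx := hbase j
      have h1 : ((Real.sqrt ((p ^ j - a) / (p ^ j + a))) ^ s) ^ (2:ℕ)
          = ((p ^ j - a) / (p ^ j + a)) ^ s := by
        rw [← Real.rpow_natCast (((p ^ j - a) / (p ^ j + a)).sqrt ^ s) 2,
          ← Real.rpow_mul (Real.sqrt_nonneg _), Real.sqrt_eq_rpow,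
          ← Real.rpow_mul hx.le]
        congr 1
        ring
      rw [h1, hbase_eq j, Real.rpow_def_of_pos (div_pos (h1m j) (h1p j))]
      congr 1
      rw [Real.log_div (h1m j).ne' (h1p j).ne']
      ring
    unfold moments
    rw [Finset.prod_congr rfl (fun j _ => hfac j), ← Real.exp_sum]
    congr 1
    rw [Finset.sum_neg_distrib, ← Finset.mul_sum, ← EE_identity hp ha0 ha1 n]
    ring
  -- the Berger measure
  set c : ℝ := Real.exp (-(s * EE p a 1)) with hcdef
  have hc0 : 0 ≤ c := (Real.exp_pos _).le
  set mass : (Σ l : ℕ, Fin l → ℕ) → ℝ≥0∞ := fun σ =>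
    ENNReal.ofReal (c * (s ^ σ.1 / (σ.1.factorial : ℝ)) * ∏ i, ee p a (σ.2 i)) with hmassdef
  set atom : (Σ l : ℕ, Fin l → ℕ) → ℝ := fun σ => (p⁻¹ : ℝ) ^ (∑ i, (2 * σ.2 i + 1))
    with hatomdef
  set μ : Measure ℝ := Measure.sum (fun σ => mass σ • Measure.dirac (atom σ)) with hμdef
  have hatom_mem : ∀ σ, atom σ ∈ Set.Icc (0:ℝ) 1 := fun σ => ⟨hqn0 _, hqn1 _⟩
  have hkey : ∀ n : ℕ, (∫⁻ t, ENNReal.ofReal (t ^ n) ∂μ)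
      = ENNReal.ofReal (Real.exp (s * EE p a ((p⁻¹) ^ n) - s * EE p a 1)) := by
    intro n
    have hEsum := summable_ee hp ha0 ha1 (hqn0 n) (hqn1 n)
    have hterm0 : ∀ k : ℕ, 0 ≤ ee p a k * ((p⁻¹:ℝ) ^ n) ^ (2 * k + 1) :=
      fun k => mul_nonneg (ee_nonneg hp ha0 k) (pow_nonneg (hqn0 n) _)
    have hEx0 : 0 ≤ EE p a ((p⁻¹) ^ n) := tsum_nonneg hterm0
    rw [hμdef, lintegral_sum_measure]
    have h1 : ∀ σ : (Σ l : ℕ, Fin l → ℕ),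
        ∫⁻ t, ENNReal.ofReal (t ^ n) ∂(mass σ • Measure.dirac (atom σ))
        = ENNReal.ofReal c * ENNReal.ofReal (s ^ σ.1 / (σ.1.factorial : ℝ)) *
            ∏ i, ENNReal.ofReal (ee p a (σ.2 i) * ((p⁻¹:ℝ) ^ n) ^ (2 * σ.2 i + 1)) := by
      rintro ⟨l, m⟩
      rw [lintegral_smul_measure, lintegral_dirac]
      have hatomn : atom ⟨l, m⟩ ^ n = ∏ i, ((p⁻¹ : ℝ) ^ n) ^ (2 * m i + 1) := by
        rw [hatomdef]
        dsimp only
        rw [← Finset.prod_pow_eq_pow_sum, ← Finset.prod_pow]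
        exact Finset.prod_congr rfl fun i _ => pow_right_comm _ _ _
      have hee0 : (0:ℝ) ≤ ∏ i, ee p a (m i) :=
        Finset.prod_nonneg fun i _ => ee_nonneg hp ha0 (m i)
      have hX0 : (0:ℝ) ≤ s ^ l / (l.factorial : ℝ) := by positivity
      have hA0 : (0:ℝ) ≤ c * (s ^ l / (l.factorial : ℝ)) * ∏ i, ee p a (m i) :=
        mul_nonneg (mul_nonneg hc0 hX0) hee0
      have hreal : (c * (s ^ l / (l.factorial : ℝ)) * ∏ i, ee p a (m i)) *
            ∏ i, ((p⁻¹:ℝ) ^ n) ^ (2 * m i + 1)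
          = c * (s ^ l / (l.factorial : ℝ)) *
            ∏ i, (ee p a (m i) * ((p⁻¹:ℝ) ^ n) ^ (2 * m i + 1)) := by
        rw [mul_assoc, ← Finset.prod_mul_distrib]
      rw [hatomn, hmassdef]
      dsimp only
      rw [smul_eq_mul, ← ENNReal.ofReal_mul hA0, hreal,
        ENNReal.ofReal_mul (mul_nonneg hc0 hX0), ENNReal.ofReal_mul hc0,
        ENNReal.ofReal_prod_of_nonneg
          (fun i _ => mul_nonneg (ee_nonneg hp ha0 (m i)) (pow_nonneg (hqn0 n) _))]
    rw [tsum_congr h1, ENNReal.tsum_sigma']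
    have h2 : ∀ l : ℕ, ∑' m : Fin l → ℕ,
        (ENNReal.ofReal c * ENNReal.ofReal (s ^ l / (l.factorial : ℝ)) *
          ∏ i, ENNReal.ofReal (ee p a (m i) * ((p⁻¹:ℝ) ^ n) ^ (2 * m i + 1)))
        = ENNReal.ofReal c * ENNReal.ofReal (s ^ l / (l.factorial : ℝ)) *
            (ENNReal.ofReal (EE p a ((p⁻¹) ^ n))) ^ l := by
      intro l
      rw [ENNReal.tsum_mul_left]
      congr 1
      have h := tsum_pi_fin (fun k => ENNReal.ofReal (ee p a k * ((p⁻¹:ℝ) ^ n) ^ (2 * k + 1))) l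
      rw [← ENNReal.ofReal_tsum_of_nonneg hterm0 hEsum] at h
      exact h
    rw [tsum_congr h2]
    have h3 : ∀ l : ℕ, ENNReal.ofReal c * ENNReal.ofReal (s ^ l / (l.factorial : ℝ)) *
          (ENNReal.ofReal (EE p a ((p⁻¹) ^ n))) ^ l
        = ENNReal.ofReal c * ENNReal.ofReal ((s * EE p a ((p⁻¹) ^ n)) ^ l / (l.factorial : ℝ)) := by
      intro l
      rw [mul_assoc, ← ENNReal.ofReal_pow hEx0,
        ← ENNReal.ofReal_mul (show (0:ℝ) ≤ s ^ l / (l.factorial : ℝ) by positivity)]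
      congr 1
      rw [mul_pow]
      ring
    rw [tsum_congr h3, ENNReal.tsum_mul_left,
      ← ENNReal.ofReal_tsum_of_nonneg (fun l => by positivity)
        (Real.summable_pow_div_factorial _),
      ← ENNReal.ofReal_mul hc0]
    congr 1
    have hexp : Real.exp (s * EE p a ((p⁻¹) ^ n)) = ∑' l : ℕ, (s * EE p a ((p⁻¹) ^ n)) ^ l / (l.factorial : ℝ) := by
      rw [Real.exp_eq_exp_ℝ, NormedSpace.exp_eq_tsum_div]
    rw [← hexp, hcdef, ← Real.exp_add]
    congr 1
    ring
  have hfin : IsFiniteMeasure μ := by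
    constructor
    have h0 := hkey 0
    simp only [pow_zero, ENNReal.ofReal_one, lintegral_one, sub_self, Real.exp_zero] at h0
    rw [h0]
    exact ENNReal.one_lt_top
  have hsupp : μ (Set.Icc (0:ℝ) 1)ᶜ = 0 := by
    rw [hμdef, Measure.sum_apply _ measurableSet_Icc.compl]
    have hz : ∀ σ : (Σ l : ℕ, Fin l → ℕ),
        (mass σ • Measure.dirac (atom σ)) (Set.Icc (0:ℝ) 1)ᶜ = 0 := by
      intro σ
      rw [Measure.smul_apply, Measure.dirac_apply' _ measurableSet_Icc.compl,
        Set.indicator_of_notMem (Set.notMem_compl_iff.2 (hatom_mem σ)), smul_zero]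
    simp only [hz, tsum_zero]
  have hae : ∀ᵐ x ∂μ, x ∈ Set.Icc (0:ℝ) 1 := by
    rw [ae_iff]
    exact measure_mono_null (fun x hx => hx) hsupp
  refine ⟨fun n => Real.rpow_pos_of_pos (Real.sqrt_pos.2 (hbase n)) s, ⟨1, fun n => ?_⟩,
    μ, hfin, ⟨Set.Icc 0 1, isCompact_Icc, Set.Icc_subset_Ici_self, hsupp⟩, fun n => ?_⟩
  · refine Real.rpow_le_one (Real.sqrt_nonneg _) ?_ hs.le
    rw [show (1:ℝ) = Real.sqrt 1 from (Real.sqrt_one).symm]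
    exact Real.sqrt_le_sqrt ((div_le_one (hpna' n)).2 (by linarith [hpna n]))
  · rw [hmom n, integral_eq_lintegral_of_nonneg_ae
      (hae.mono fun x hx => pow_nonneg hx.1 n) (continuous_pow n).aestronglyMeasurable,
      hkey n, ENNReal.toReal_ofReal (Real.exp_nonneg _)]

/-- Theorem 3.1(3a), NW-SE shadow. -/
theorem midSubord_NWSE_shadow (p N D M P : ℝ) (hp : 1 < p)
    (hN : -1 < N) (hN' : N < 1) (hD : -1 < D) (hD' : D < 1)
    (hM : -1 < M) (hM' : M < 1) (hP : -1 < P) (hP' : P < 1)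
    (h : MIDSubord p N D M P) (hM0 : M ≤ 0) (hP0 : 0 ≤ P) :
    MIDSubord p N D (-M) (-P) := by
  intro s hs
  have h1 := h s hs
  have hM1 : 0 ≤ -M := neg_nonneg.2 hM0
  have hM2 : -M < 1 := by linarith
  have h2 := isSubnormal_T s hp hM1 hM2 hs
  have h3 := isSubnormal_T s hp hP0 hP' hs
  have h4 := isSubnormal_mul h1 (isSubnormal_mul h2 h3)
  have hEq : (fun n => (grws p N D n / grws p (-M) (-P) n) ^ s)
      = fun n => (grws p N D n / grws p M P n) ^ s *
          ((Real.sqrt ((p ^ n - -M) / (p ^ n + -M))) ^ s *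
            (Real.sqrt ((p ^ n - P) / (p ^ n + P))) ^ s) := by
    funext n
    have hpn : (1:ℝ) ≤ p ^ n := one_le_pow₀ hp.le
    have c1 : (0:ℝ) < p ^ n + N := by linarith
    have c2 : (0:ℝ) < p ^ n + D := by linarith
    have c3 : (0:ℝ) < p ^ n + M := by linarith
    have c4 : (0:ℝ) < p ^ n - M := by linarith
    have c5 : (0:ℝ) < p ^ n + P := by linarith
    have c6 : (0:ℝ) < p ^ n - P := by linarith
    unfold grws
    rw [← Real.mul_rpow (Real.sqrt_nonneg _) (Real.sqrt_nonneg _),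
      ← Real.mul_rpow (div_nonneg (Real.sqrt_nonneg _) (Real.sqrt_nonneg _))
        (mul_nonneg (Real.sqrt_nonneg _) (Real.sqrt_nonneg _))]
    congr 1
    have hX : (0:ℝ) ≤ (p ^ n + N) / (p ^ n + D) := div_nonneg c1.le c2.le
    have hU : (0:ℝ) ≤ (p ^ n - -M) / (p ^ n + -M) :=
      div_nonneg (by linarith) (by linarith)
    have hXZ : (0:ℝ) ≤ (p ^ n + N) / (p ^ n + D) / ((p ^ n + M) / (p ^ n + P)) :=
      div_nonneg hX (div_nonneg c3.le c5.le)
    rw [← Real.sqrt_div hX, ← Real.sqrt_div hX, ← Real.sqrt_mul hU, ← Real.sqrt_mul hXZ]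
    congr 1
    field_simp
    ring
  have hgoal : IsSubnormalWeight (fun n => (grws p N D n / grws p (-M) (-P) n) ^ s) := by
    rw [hEq]
    exact h4
  exact hgoal
end

section
/- (Lemma 3.2.) Fix p > 1 and let (M,P) lie in the open square (−1,1)×(−1,1) with P ≥ M and MP ≥ 0. Then (M,P) ≫ (−M,−P); that is, the quotient sequence (α_n(M,P)/α_n(−M,−P))_{n≥0}, whose n-th square equals (p^n+M)(p^n−P)/((p^n−M)(p^n+P)), is an MID weight sequence. -/
open MeasureTheory

set_option linter.unusedSectionVars false
set_option maxHeartbeats 1000000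

noncomputable section MidAuxSec
namespace MidAux
open Real

open scoped ENNReal

/-- Taylor coefficients of `-log g` where `g(x) = (1+Mx)(1-Px)/((1-Mx)(1+Px))`. -/
def ee (M P : ℝ) (k : ℕ) : ℝ :=
  (P ^ (k+1) - (-P) ^ (k+1) - (M ^ (k+1) - (-M) ^ (k+1))) / (k+1)

/-- `EE p M P j k = ee k * q^(j(k+1))`, `q = 1/p`. -/
def EE (p M P : ℝ) (j k : ℕ) : ℝ := ee M P k * p⁻¹ ^ (j * (k+1))

/-- `cc p M P j = -log g_j` where `g_j` is the square of the `j`-th quotient weight. -/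
def cc (p M P : ℝ) (j : ℕ) : ℝ :=
  -Real.log (((p ^ j + M) * (p ^ j - P)) / ((p ^ j - M) * (p ^ j + P)))

lemma hpj {p : ℝ} (hp : 1 < p) (j : ℕ) : 1 ≤ p ^ j := one_le_pow₀ hp.le

lemma ee_nonneg {M P : ℝ} (hMP : M ≤ P) (k : ℕ) : 0 ≤ ee M P k := by
  rcases Nat.even_or_odd (k+1) with he | ho
  · simp [ee, he.neg_pow]
  · have h1 : M ^ (k+1) ≤ P ^ (k+1) := (Odd.strictMono_pow ho).monotone hMP
    rw [ee, ho.neg_pow, ho.neg_pow]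
    have : (0:ℝ) < (k:ℝ) + 1 := by positivity
    apply div_nonneg _ this.le; linarith

lemma EE_nonneg {p M P : ℝ} (hp : 1 < p) (hMP : M ≤ P) (j k : ℕ) : 0 ≤ EE p M P j k :=
  mul_nonneg (ee_nonneg hMP k) (pow_nonneg (inv_pos.2 (lt_trans one_pos hp)).le _)

lemma EE_shift (p M P : ℝ) (n j k : ℕ) :
    EE p M P j k * p⁻¹ ^ (n * (k+1)) = EE p M P (n + j) k := by
  rw [EE, EE, mul_assoc, ← pow_add]
  congr 2
  ring

lemma hasSum_cc {p M P : ℝ} (hp : 1 < p) (hM : -1 < M) (hM' : M < 1) (hP : -1 < P)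
    (hP' : P < 1) (j : ℕ) : HasSum (fun k => EE p M P j k) (cc p M P j) := by
  have hp0 : (0:ℝ) < p := lt_trans one_pos hp
  have hpj' : (0:ℝ) < p ^ j := pow_pos hp0 j
  set x : ℝ := p⁻¹ ^ j with hxdef
  have hx0 : 0 < x := pow_pos (inv_pos.2 hp0) j
  have hx1 : x ≤ 1 := pow_le_one₀ (inv_pos.2 hp0).le (inv_lt_one_of_one_lt₀ hp).le
  have habs : ∀ a : ℝ, -1 < a → a < 1 → |a * x| < 1 := by
    intro a h1 h2
    rw [abs_mul, abs_of_pos hx0]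
    calc |a| * x ≤ |a| * 1 := by gcongr
      _ < 1 := by rw [mul_one]; exact abs_lt.2 ⟨h1, h2⟩
  have h1 := Real.hasSum_pow_div_log_of_abs_lt_one (habs M hM hM')
  have h2 := Real.hasSum_pow_div_log_of_abs_lt_one (habs P hP hP')
  have h3 := Real.hasSum_pow_div_log_of_abs_lt_one
    (habs (-M) (by linarith) (by linarith))
  have h4 := Real.hasSum_pow_div_log_of_abs_lt_one
    (habs (-P) (by linarith) (by linarith))
  -- h1 : HasSum (fun k => (M*x)^(k+1)/(k+1)) (-log (1 - M*x))
  -- h3 : HasSum (fun k => (-M*x)^(k+1)/(k+1)) (-log (1 + M*x))  (since 1 - (-M*x) = 1 + M*x)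
  rw [show (1:ℝ) - -M * x = 1 + M * x by ring] at h3
  rw [show (1:ℝ) - -P * x = 1 + P * x by ring] at h4
  have H := ((h1.neg.add h4.neg).add (h3.add h2))
  have hterm : (fun k : ℕ => -((M*x)^(k+1)/(k+1)) + -((-P*x)^(k+1)/(k+1)) +
      ((-M*x)^(k+1)/(k+1) + (P*x)^(k+1)/(k+1))) = fun k => EE p M P j k := by
    funext k
    have hx : x ^ (k+1) = p⁻¹ ^ (j * (k+1)) := by rw [hxdef, ← pow_mul]
    rw [EE, ee, ← hx]
    have hk : ((k:ℝ)+1) ≠ 0 := by positivity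
    field_simp
    ring
  rw [hterm] at H
  -- now identify the sum
  have hxinv : (p ^ j)⁻¹ = x := by rw [hxdef, ← inv_pow]
  have e1 : 1 - M * x = (p ^ j - M) * x := by
    rw [← hxinv]; field_simp
  have e2 : 1 + M * x = (p ^ j + M) * x := by rw [← hxinv]; field_simp
  have e3 : 1 - P * x = (p ^ j - P) * x := by rw [← hxinv]; field_simp
  have e4 : 1 + P * x = (p ^ j + P) * x := by rw [← hxinv]; field_simp
  have pMp : (0:ℝ) < p ^ j + M := by have := hpj hp (p := p) j; linarith
  have pMm : (0:ℝ) < p ^ j - M := by have := hpj hp (p := p) j; linarith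
  have pPp : (0:ℝ) < p ^ j + P := by have := hpj hp (p := p) j; linarith
  have pPm : (0:ℝ) < p ^ j - P := by have := hpj hp (p := p) j; linarith
  have hsum : - -log (1 - M*x) + - -log (1 + P*x) + (-log (1 + M*x) + -log (1 - P*x))
      = cc p M P j := by
    rw [e1, e2, e3, e4, cc]
    rw [Real.log_mul pMm.ne' hx0.ne', Real.log_mul pMp.ne' hx0.ne',
      Real.log_mul pPm.ne' hx0.ne', Real.log_mul pPp.ne' hx0.ne',
      Real.log_div (by positivity) (by positivity),
      Real.log_mul pMp.ne' pPm.ne', Real.log_mul pMm.ne' pPp.ne']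
    ring
  rw [← hsum]
  exact H
section S
variable {p M P : ℝ} (hp : 1 < p) (hM : -1 < M) (hM' : M < 1) (hP : -1 < P)
  (hP' : P < 1) (hMP : M ≤ P)

include hp hM hM' hP hP' hMP

lemma cc_nonneg (j : ℕ) : 0 ≤ cc p M P j := by
  have h1 : (0:ℝ) < p ^ j + M := by have := hpj hp (p := p) j; linarith
  have h2 : (0:ℝ) < p ^ j - M := by have := hpj hp (p := p) j; linarith
  have h3 : (0:ℝ) < p ^ j + P := by have := hpj hp (p := p) j; linarith
  have h4 : (0:ℝ) < p ^ j - P := by have := hpj hp (p := p) j; linarith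
  rw [cc, neg_nonneg]
  apply Real.log_nonpos (by positivity)
  rw [div_le_one (by positivity)]
  nlinarith [pow_pos (lt_trans one_pos hp) j]

omit hp hMP in
lemma summable_ee : Summable (ee M P) := by
  set r := max |M| |P| with hr
  have hr0 : 0 ≤ r := le_trans (abs_nonneg M) (le_max_left _ _)
  have hr1 : r < 1 := max_lt (abs_lt.2 ⟨by linarith, hM'⟩) (abs_lt.2 ⟨by linarith, hP'⟩)
  apply Summable.of_abs
  refine Summable.of_nonneg_of_le (fun k => abs_nonneg _) (fun k => ?_)
    ((summable_geometric_of_lt_one hr0 hr1).mul_left 4)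
  have bM : |M| ^ (k+1) ≤ r ^ k := by
    calc |M| ^ (k+1) ≤ r ^ (k+1) := pow_le_pow_left₀ (abs_nonneg M) (le_max_left _ _) _
      _ ≤ r ^ k := pow_le_pow_of_le_one hr0 hr1.le (Nat.le_succ k)
  have bP : |P| ^ (k+1) ≤ r ^ k := by
    calc |P| ^ (k+1) ≤ r ^ (k+1) := pow_le_pow_left₀ (abs_nonneg P) (le_max_right _ _) _
      _ ≤ r ^ k := pow_le_pow_of_le_one hr0 hr1.le (Nat.le_succ k)
  have h1 : |P ^ (k+1)| ≤ r ^ k := by rw [abs_pow]; exact bP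
  have h2 : |(-P) ^ (k+1)| ≤ r ^ k := by rw [abs_pow, abs_neg]; exact bP
  have h3 : |M ^ (k+1)| ≤ r ^ k := by rw [abs_pow]; exact bM
  have h4 : |(-M) ^ (k+1)| ≤ r ^ k := by rw [abs_pow, abs_neg]; exact bM
  have hd : (1:ℝ) ≤ (k:ℝ) + 1 := by have := Nat.cast_nonneg (α:=ℝ) k; linarith
  rw [ee, abs_div, abs_of_pos (show (0:ℝ) < (k:ℝ)+1 by positivity)]
  rw [div_le_iff₀ (by positivity)]
  have habs : |P ^ (k+1) - (-P) ^ (k+1) - (M ^ (k+1) - (-M) ^ (k+1))| ≤ 4 * r ^ k := by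
    have := abs_sub (P ^ (k+1)) ((-P) ^ (k+1))
    calc |P ^ (k+1) - (-P) ^ (k+1) - (M ^ (k+1) - (-M) ^ (k+1))|
        ≤ |P ^ (k+1)| + |(-P) ^ (k+1)| + (|M ^ (k+1)| + |(-M) ^ (k+1)|) := by
          apply le_trans (abs_sub _ _)
          gcongr <;> exact abs_sub _ _
      _ ≤ 4 * r ^ k := by linarith
  calc |P ^ (k+1) - (-P) ^ (k+1) - (M ^ (k+1) - (-M) ^ (k+1))| ≤ 4 * r ^ k := habs
    _ ≤ 4 * r ^ k * ((k:ℝ)+1) := by nlinarith [pow_nonneg hr0 k]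

lemma cc_le (j : ℕ) : cc p M P j ≤ (∑' k, ee M P k) * p⁻¹ ^ j := by
  have hq0 : (0:ℝ) < p⁻¹ := inv_pos.2 (lt_trans one_pos hp)
  have hq1 : p⁻¹ < 1 := inv_lt_one_of_one_lt₀ hp
  have hEE : ∀ k, EE p M P j k ≤ ee M P k * p⁻¹ ^ j := by
    intro k
    rw [EE]
    apply mul_le_mul_of_nonneg_left _ (ee_nonneg hMP k)
    exact pow_le_pow_of_le_one hq0.le hq1.le (Nat.le_mul_of_pos_right j k.succ_pos)
  rw [← (hasSum_cc hp hM hM' hP hP' j).tsum_eq, ← tsum_mul_right]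
  exact Summable.tsum_le_tsum hEE (hasSum_cc hp hM hM' hP hP' j).summable
    ((summable_ee hM hM' hP hP').mul_right _)

lemma summable_cc : Summable (cc p M P) := by
  have hq0 : (0:ℝ) < p⁻¹ := inv_pos.2 (lt_trans one_pos hp)
  have hq1 : p⁻¹ < 1 := inv_lt_one_of_one_lt₀ hp
  refine Summable.of_nonneg_of_le (cc_nonneg hp hM hM' hP hP' hMP)
    (cc_le hp hM hM' hP hP' hMP)
    ((summable_geometric_of_lt_one hq0.le hq1).mul_left _)

lemma summable_EE_shift (n : ℕ) :
    Summable (fun jk : ℕ × ℕ => EE p M P (n + jk.1) jk.2) := by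
  rw [summable_prod_of_nonneg (fun jk => EE_nonneg hp hMP _ _)]
  constructor
  · exact fun j => (hasSum_cc hp hM hM' hP hP' (n + j)).summable
  · apply Summable.congr (f := fun j => cc p M P (n + j))
    · apply Summable.comp_injective (summable_cc hp hM hM' hP hP' hMP)
      exact fun a b h => by omega
    · exact fun j => ((hasSum_cc hp hM hM' hP hP' (n + j)).tsum_eq).symm

end S

lemma tsum_pi_pow {ι : Type*} (f : ι → ℝ≥0∞) (m : ℕ) :
    ∑' v : Fin m → ι, ∏ i, f (v i) = (∑' x, f x) ^ m := by
  induction m with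
  | zero =>
    rw [tsum_eq_single (fun i : Fin 0 => i.elim0) ?_]
    · simp
    · intro v hv
      exact absurd (funext fun i => i.elim0) hv
  | succ m ih =>
    rw [← (Fin.consEquiv (fun _ => ι)).tsum_eq (fun v => ∏ i, f (v i))]
    have hterm : ∀ y : ι × (Fin m → ι),
        (∏ i, f ((Fin.consEquiv (fun _ => ι)) y i)) = f y.1 * ∏ i, f (y.2 i) := by
      intro y
      rw [Fin.prod_univ_succ]
      simp [Fin.consEquiv]
    rw [tsum_congr hterm, ENNReal.tsum_prod']
    simp_rw [ENNReal.tsum_mul_left, ENNReal.tsum_mul_right, ih, pow_succ]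
    rw [mul_comm]

/-- index for the atomic Berger measure -/
abbrev PIdx : Type := Σ m : ℕ, Fin m → ℕ × ℕ

noncomputable def pt (p : ℝ) (z : PIdx) : ℝ := p⁻¹ ^ (∑ i, ((z.2 i).2 + 1))

noncomputable def wt (p M P s : ℝ) (z : PIdx) : ℝ≥0∞ :=
  (Nat.factorial z.1 : ℝ≥0∞)⁻¹ * ∏ i, ENNReal.ofReal (s * EE p M P (z.2 i).1 (z.2 i).2)

noncomputable def mu (p M P s : ℝ) : Measure ℝ :=
  ENNReal.ofReal (Real.exp (-(s * ∑' j, cc p M P j))) •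
    Measure.sum (fun z : PIdx => wt p M P s z • Measure.dirac (pt p z))

section Main
variable {p M P s : ℝ} (hp : 1 < p) (hM : -1 < M) (hM' : M < 1) (hP : -1 < P)
  (hP' : P < 1) (hMP : M ≤ P) (hs : 0 < s)

include hp hM hM' hP hP' hMP hs in
lemma key_lintegral (n : ℕ) :
    ∫⁻ x, ENNReal.ofReal (x ^ n) ∂(mu p M P s) =
      ENNReal.ofReal (Real.exp (-(s * ∑ j ∈ Finset.range n, cc p M P j))) := by
  have hq0 : (0:ℝ) < p⁻¹ := inv_pos.2 (lt_trans one_pos hp)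
  -- Step 1: reduce to a tsum over PIdx
  have hmeas : Measurable fun x : ℝ => ENNReal.ofReal (x ^ n) :=
    (measurable_id.pow_const n).ennreal_ofReal
  rw [mu, lintegral_smul_measure, lintegral_sum_measure]
  simp_rw [lintegral_smul_measure, lintegral_dirac' _ hmeas, smul_eq_mul]
  -- Step 2: the tsum over the sigma type
  set G : ℕ → ℕ × ℕ → ℝ≥0∞ := fun n jk => ENNReal.ofReal (s * EE p M P (n + jk.1) jk.2)
    with hG
  have hterm : ∀ z : PIdx, wt p M P s z * ENNReal.ofReal (pt p z ^ n)
      = (Nat.factorial z.1 : ℝ≥0∞)⁻¹ * ∏ i, G n (z.2 i) := by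
    rintro ⟨m, v⟩
    have hptn : pt p ⟨m, v⟩ ^ n = ∏ i, p⁻¹ ^ (n * ((v i).2 + 1)) := by
      rw [pt, ← pow_mul]
      rw [Finset.prod_pow_eq_pow_sum]
      congr 1
      rw [Finset.sum_mul]
      exact Finset.sum_congr rfl fun i _ => mul_comm _ _
    rw [wt, hptn, ENNReal.ofReal_prod_of_nonneg (fun i _ => by positivity), mul_assoc,
      ← Finset.prod_mul_distrib]
    congr 1
    apply Finset.prod_congr rfl
    intro i _
    have hnn : 0 ≤ s * EE p M P (v i).1 (v i).2 :=
      mul_nonneg hs.le (EE_nonneg hp hMP _ _)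
    rw [← ENNReal.ofReal_mul hnn]
    show ENNReal.ofReal _ = ENNReal.ofReal (s * EE p M P (n + (v i).1) (v i).2)
    congr 1
    rw [mul_assoc, EE_shift]
  rw [tsum_congr hterm, ENNReal.tsum_sigma']
  simp_rw [ENNReal.tsum_mul_left]
  have hpi : ∀ m : ℕ, (∑' v : Fin m → ℕ × ℕ, ∏ i, G n (v i)) = (∑' jk : ℕ × ℕ, G n jk) ^ m :=
    fun m => tsum_pi_pow (G n) m
  simp_rw [hpi]
  -- Step 3: identify the geometric data
  have hsum_shift := summable_EE_shift hp hM hM' hP hP' hMP n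
  have h3 : (∑' jk : ℕ × ℕ, G n jk) = ENNReal.ofReal (s * ∑' j, cc p M P (n + j)) := by
    have hnn : ∀ jk : ℕ × ℕ, 0 ≤ s * EE p M P (n + jk.1) jk.2 :=
      fun jk => mul_nonneg hs.le (EE_nonneg hp hMP _ _)
    rw [hG, ← ENNReal.ofReal_tsum_of_nonneg hnn (hsum_shift.mul_left s)]
    congr 1
    rw [Summable.tsum_prod (hsum_shift.mul_left s)]
    have hrow : ∀ j : ℕ, ∑' k, s * EE p M P (n + j) k = s * cc p M P (n + j) := by
      intro j
      rw [← (hasSum_cc hp hM hM' hP hP' (n + j)).tsum_eq, tsum_mul_left]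
    rw [tsum_congr hrow, tsum_mul_left]
  rw [h3]
  -- Step 4: sum the exponential series
  set y : ℝ := s * ∑' j, cc p M P (n + j) with hy
  have hy0 : 0 ≤ y := by
    apply mul_nonneg hs.le
    exact tsum_nonneg (fun j => cc_nonneg hp hM hM' hP hP' hMP _)
  have h4 : (∑' m : ℕ, (Nat.factorial m : ℝ≥0∞)⁻¹ * ENNReal.ofReal y ^ m)
      = ENNReal.ofReal (Real.exp y) := by
    have hterm2 : ∀ m : ℕ, (Nat.factorial m : ℝ≥0∞)⁻¹ * ENNReal.ofReal y ^ m
        = ENNReal.ofReal (y ^ m / Nat.factorial m) := by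
      intro m
      rw [← ENNReal.ofReal_pow hy0,
        ENNReal.ofReal_div_of_pos (by positivity : (0:ℝ) < (Nat.factorial m : ℝ)),
        ENNReal.ofReal_natCast, div_eq_mul_inv, mul_comm]
    rw [tsum_congr hterm2,
      ← ENNReal.ofReal_tsum_of_nonneg (fun m => by positivity)
        (Real.summable_pow_div_factorial y)]
    congr 1
    rw [Real.exp_eq_exp_ℝ, NormedSpace.exp_eq_tsum_div]
  rw [h4, ← ENNReal.ofReal_mul (Real.exp_nonneg _), ← Real.exp_add]
  congr 2
  -- Step 5: telescoping of the log sums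
  have hT := Summable.sum_add_tsum_nat_add n (summable_cc hp hM hM' hP hP' hMP)
  have hRn : (∑' j, cc p M P (j + n)) = ∑' j, cc p M P (n + j) :=
    tsum_congr fun j => by rw [add_comm]
  rw [hy, ← hT, hRn]
  ring


include hp hM hM' hP hP' in
lemma wsq (j : ℕ) : (grws p M P j / grws p (-M) (-P) j) ^ 2
    = ((p ^ j + M) * (p ^ j - P)) / ((p ^ j - M) * (p ^ j + P)) := by
  have h1 : (0:ℝ) < p ^ j + M := by have := hpj hp (p := p) j; linarith
  have h2 : (0:ℝ) < p ^ j - M := by have := hpj hp (p := p) j; linarith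
  have h3 : (0:ℝ) < p ^ j + P := by have := hpj hp (p := p) j; linarith
  have h4 : (0:ℝ) < p ^ j - P := by have := hpj hp (p := p) j; linarith
  rw [grws, grws]
  rw [div_pow, Real.sq_sqrt (by positivity), Real.sq_sqrt ?hn]
  · rw [show p ^ j + -M = p ^ j - M by ring, show p ^ j + -P = p ^ j - P by ring]
    field_simp
  · rw [show p ^ j + -M = p ^ j - M by ring, show p ^ j + -P = p ^ j - P by ring]
    positivity

include hp hM hM' hP hP' in
lemma w_pos (j : ℕ) : 0 < grws p M P j / grws p (-M) (-P) j := by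
  have h1 : (0:ℝ) < p ^ j + M := by have := hpj hp (p := p) j; linarith
  have h2 : (0:ℝ) < p ^ j + -M := by have := hpj hp (p := p) j; linarith
  have h3 : (0:ℝ) < p ^ j + P := by have := hpj hp (p := p) j; linarith
  have h4 : (0:ℝ) < p ^ j + -P := by have := hpj hp (p := p) j; linarith
  rw [grws, grws]
  apply div_pos <;> apply Real.sqrt_pos.2 <;> positivity

include hp hM hM' hP hP' hMP in
lemma w_le_one (j : ℕ) : grws p M P j / grws p (-M) (-P) j ≤ 1 := by
  have h2 : (0:ℝ) < p ^ j - M := by have := hpj hp (p := p) j; linarith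
  have h3 : (0:ℝ) < p ^ j + P := by have := hpj hp (p := p) j; linarith
  have hw := w_pos hp hM hM' hP hP' (j := j)
  rw [← pow_le_one_iff_of_nonneg hw.le two_ne_zero, wsq hp hM hM' hP hP']
  rw [div_le_one (by positivity)]
  nlinarith [pow_pos (lt_trans one_pos hp) j]

include hp hM hM' hP hP' hMP hs in
lemma moments_eq (n : ℕ) :
    moments (fun k => (grws p M P k / grws p (-M) (-P) k) ^ s) n
      = Real.exp (-(s * ∑ j ∈ Finset.range n, cc p M P j)) := by
  rw [moments]
  have hterm : ∀ j : ℕ, ((grws p M P j / grws p (-M) (-P) j) ^ s) ^ 2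
      = Real.exp (-(s * cc p M P j)) := by
    intro j
    have hw := w_pos hp hM hM' hP hP' (j := j)
    have hg : (0:ℝ) < ((p ^ j + M) * (p ^ j - P)) / ((p ^ j - M) * (p ^ j + P)) := by
      rw [← wsq hp hM hM' hP hP']
      positivity
    have hswap : ((grws p M P j / grws p (-M) (-P) j) ^ s) ^ (2:ℕ)
        = ((grws p M P j / grws p (-M) (-P) j) ^ (2:ℕ)) ^ s := by
      rw [← Real.rpow_natCast ((grws p M P j / grws p (-M) (-P) j) ^ s) 2,
        ← Real.rpow_mul hw.le, mul_comm, Real.rpow_mul hw.le, Real.rpow_natCast]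
    rw [hswap, wsq hp hM hM' hP hP', Real.rpow_def_of_pos hg, cc]
    congr 1
    ring
  rw [Finset.prod_congr rfl fun j _ => hterm j, ← Real.exp_sum]
  congr 1
  rw [Finset.mul_sum]
  simp


end Main
end MidAux
end MidAuxSec

/-- Lemma 3.2. -/
theorem midSubord_neg_neg (p M P : ℝ) (hp : 1 < p)
    (hM : -1 < M) (hM' : M < 1) (hP : -1 < P) (hP' : P < 1)
    (hMP : M ≤ P) (hprod : 0 ≤ M * P) :
    MIDSubord p M P (-M) (-P) := by
  intro s hs
  have wpos : ∀ n : ℕ, 0 < grws p M P n / grws p (-M) (-P) n :=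
    fun n => MidAux.w_pos hp hM hM' hP hP' (j := n)
  have wle : ∀ n : ℕ, grws p M P n / grws p (-M) (-P) n ≤ 1 :=
    fun n => MidAux.w_le_one hp hM hM' hP hP' hMP (j := n)
  have hnull : MidAux.mu p M P s (Set.Icc (0:ℝ) 1)ᶜ = 0 := by
    rw [MidAux.mu, Measure.smul_apply,
      Measure.sum_apply _ measurableSet_Icc.compl]
    have hz : ∀ z : MidAux.PIdx,
        (MidAux.wt p M P s z • Measure.dirac (MidAux.pt p z)) (Set.Icc (0:ℝ) 1)ᶜ = 0 := by
      intro z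
      have hq0 : (0:ℝ) < p⁻¹ := inv_pos.2 (lt_trans one_pos hp)
      have hmem : MidAux.pt p z ∈ Set.Icc (0:ℝ) 1 := by
        constructor
        · exact pow_nonneg hq0.le _
        · exact pow_le_one₀ hq0.le (inv_le_one_of_one_le₀ hp.le)
      rw [Measure.smul_apply, Measure.dirac_apply' _ measurableSet_Icc.compl]
      rw [Set.indicator_of_notMem (by simpa using hmem)]
      simp
    simp only [hz]
    simp
  have hint : ∀ n : ℕ,
      ∫ x, x ^ n ∂(MidAux.mu p M P s)
        = Real.exp (-(s * ∑ j ∈ Finset.range n, MidAux.cc p M P j)) := by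
    intro n
    have hae : (0 : ℝ → ℝ) ≤ᵐ[MidAux.mu p M P s] fun x : ℝ => x ^ n := by
      have hsub : {x : ℝ | ¬ (0:ℝ) ≤ x ^ n} ⊆ (Set.Icc (0:ℝ) 1)ᶜ := by
        intro x hx
        simp only [Set.mem_setOf_eq, not_le] at hx
        intro hmem
        exact absurd (pow_nonneg hmem.1 n) (not_le.2 hx)
      have h0 : ∀ᵐ x ∂(MidAux.mu p M P s), (0:ℝ) ≤ x ^ n := by
        rw [ae_iff]
        exact measure_mono_null hsub hnull
      exact h0.mono fun x hx => by simpa using hx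
    rw [integral_eq_lintegral_of_nonneg_ae hae ((continuous_pow n).aestronglyMeasurable),
      MidAux.key_lintegral hp hM hM' hP hP' hMP hs n,
      ENNReal.toReal_ofReal (Real.exp_nonneg _)]
  have hfin : IsFiniteMeasure (MidAux.mu p M P s) := by
    constructor
    have h0 := MidAux.key_lintegral (p := p) (M := M) (P := P) (s := s)
      hp hM hM' hP hP' hMP hs 0
    simp only [pow_zero, ENNReal.ofReal_one, lintegral_one, Finset.range_zero,
      Finset.sum_empty, mul_zero, neg_zero, Real.exp_zero] at h0
    rw [h0]
    exact ENNReal.one_lt_top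
  refine ⟨fun n => Real.rpow_pos_of_pos (wpos n) s, ⟨1, fun n =>
      Real.rpow_le_one (wpos n).le (wle n) hs.le⟩,
    MidAux.mu p M P s, hfin,
    ⟨Set.Icc 0 1, isCompact_Icc, fun x hx => hx.1, hnull⟩, fun n => ?_⟩
  rw [hint n, ← MidAux.moments_eq hp hM hM' hP hP' hMP hs n]
end

section
/- (Key step in the proof of Theorem 3.1(2).) Fix p > 1 and let (M,P) lie in the open square (−1,1)×(−1,1) with |M| ≥ |P|. Then (M,P) ≫ (−P,−M); equivalently, the sequence (√((p^{2n}−M²)/(p^{2n}−P²)))_{n≥0} is an MID weight sequence. -/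
open MeasureTheory

namespace MidAux

/-- coefficient `c_k = (a^{k+1} - b^{k+1}) / ((k+1)(1 - q^{k+1}))`. -/
noncomputable def C (q a b : ℝ) (k : ℕ) : ℝ :=
  (a ^ (k + 1) - b ^ (k + 1)) / ((k + 1) * (1 - q ^ (k + 1)))

/-- the generating function `f(x) = ∑ c_k x^{k+1}`. -/
noncomputable def F (q a b x : ℝ) : ℝ := ∑' k : ℕ, C q a b k * x ^ (k + 1)

variable {q a b : ℝ}

lemma C_nonneg (hq0 : 0 < q) (hq1 : q < 1) (hb0 : 0 ≤ b) (hba : b ≤ a) (k : ℕ) :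
    0 ≤ C q a b k := by
  apply div_nonneg
  · have := pow_le_pow_left₀ hb0 hba (k + 1)
    linarith
  · have h1 : q ^ (k + 1) < 1 := pow_lt_one₀ hq0.le hq1 (Nat.succ_ne_zero k)
    have h2 : (0:ℝ) < (k+1:ℝ) := by positivity
    nlinarith

lemma C_le (hq0 : 0 < q) (hq1 : q < 1) (hb0 : 0 ≤ b) (hba : b ≤ a) (k : ℕ) :
    C q a b k ≤ a ^ (k + 1) / (1 - q) := by
  have ha0 : 0 ≤ a := hb0.trans hba
  have hb : 0 ≤ b ^ (k + 1) := pow_nonneg hb0 _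
  have hnum : a ^ (k + 1) - b ^ (k + 1) ≤ a ^ (k + 1) := by linarith
  have hqk : q ^ (k + 1) ≤ q := pow_le_of_le_one hq0.le hq1.le (Nat.succ_ne_zero k)
  have hden : 1 - q ≤ (k + 1 : ℝ) * (1 - q ^ (k + 1)) := by
    have h1 : (1 : ℝ) ≤ (k + 1 : ℝ) := by exact_mod_cast Nat.one_le_iff_ne_zero.2 (Nat.succ_ne_zero k)
    have h2 : 1 - q ≤ 1 - q ^ (k + 1) := by linarith
    nlinarith [pow_lt_one₀ hq0.le hq1 (Nat.succ_ne_zero k)]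
  have hpos : 0 < 1 - q := by linarith
  calc C q a b k ≤ (a ^ (k + 1)) / (1 - q) := by
        apply div_le_div₀ (pow_nonneg ha0 _) hnum hpos hden

lemma summable_C_mul (hq0 : 0 < q) (hq1 : q < 1) (hb0 : 0 ≤ b) (hba : b ≤ a) (ha1 : a < 1)
    {x : ℝ} (hx0 : 0 ≤ x) (hx1 : x ≤ 1) :
    Summable (fun k : ℕ => C q a b k * x ^ (k + 1)) := by
  have ha0 : 0 ≤ a := hb0.trans hba
  have hsum : Summable fun k : ℕ => a ^ (k + 1) / (1 - q) := by
    apply Summable.div_const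
    exact (summable_geometric_of_lt_one ha0 ha1).comp_injective (add_left_injective 1)
  refine Summable.of_nonneg_of_le
    (fun k => mul_nonneg (C_nonneg hq0 hq1 hb0 hba k) (pow_nonneg hx0 _))
    (fun k => ?_) hsum
  calc C q a b k * x ^ (k + 1) ≤ C q a b k * 1 := by
        exact mul_le_mul_of_nonneg_left (pow_le_one₀ hx0 hx1) (C_nonneg hq0 hq1 hb0 hba k)
    _ = C q a b k := mul_one _
    _ ≤ a ^ (k + 1) / (1 - q) := C_le hq0 hq1 hb0 hba k

end MidAux

namespace MidAux
variable {q a b : ℝ}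

lemma aux_lt_one (hq0 : 0 < q) (hq1 : q < 1) {a : ℝ} (ha0 : 0 ≤ a) (ha1 : a < 1) (j : ℕ) :
    a * q ^ j < 1 := by
  have h1 : q ^ j ≤ 1 := pow_le_one₀ hq0.le hq1.le
  nlinarith [pow_pos hq0 j]

lemma hasSum_log (hq0 : 0 < q) (hq1 : q < 1) (hb0 : 0 ≤ b) (hba : b ≤ a) (ha1 : a < 1) (j : ℕ) :
    HasSum (fun k : ℕ => ((b * q ^ j) ^ (k + 1) - (a * q ^ j) ^ (k + 1)) / (k + 1))
      (Real.log ((1 - a * q ^ j) / (1 - b * q ^ j))) := by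
  have ha0 : 0 ≤ a := hb0.trans hba
  have hqj : 0 < q ^ j := pow_pos hq0 j
  have haj : a * q ^ j < 1 := aux_lt_one hq0 hq1 ha0 ha1 j
  have hbj : b * q ^ j < 1 := aux_lt_one hq0 hq1 hb0 (hba.trans_lt ha1) j
  have haj0 : 0 ≤ a * q ^ j := mul_nonneg ha0 hqj.le
  have hbj0 : 0 ≤ b * q ^ j := mul_nonneg hb0 hqj.le
  have h1 := Real.hasSum_pow_div_log_of_abs_lt_one (x := b * q ^ j) (by rw [abs_of_nonneg hbj0]; exact hbj)
  have h2 := Real.hasSum_pow_div_log_of_abs_lt_one (x := a * q ^ j) (by rw [abs_of_nonneg haj0]; exact haj)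
  have h3 := h1.sub h2
  have heq : Real.log ((1 - a * q ^ j) / (1 - b * q ^ j))
      = -Real.log (1 - b * q ^ j) - -Real.log (1 - a * q ^ j) := by
    rw [Real.log_div (by linarith) (by linarith)]; ring
  rw [heq]
  refine h3.congr_fun fun k => ?_
  rw [sub_div]

lemma key_alg (hq0 : 0 < q) (hq1 : q < 1) (n k : ℕ) :
    C q a b k * ((q ^ n) ^ (k + 1) - 1 ^ (k + 1))
      = ∑ j ∈ Finset.range n, ((b * q ^ j) ^ (k + 1) - (a * q ^ j) ^ (k + 1)) / (k + 1) := by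
  have ht1 : q ^ (k + 1) < 1 := pow_lt_one₀ hq0.le hq1 (Nat.succ_ne_zero k)
  have htne : (1 : ℝ) - q ^ (k + 1) ≠ 0 := by linarith
  have hkne : ((k : ℝ) + 1) ≠ 0 := by positivity
  have hstep : ∀ j, ((b * q ^ j) ^ (k + 1) - (a * q ^ j) ^ (k + 1)) / (k + 1)
      = ((b ^ (k + 1) - a ^ (k + 1)) / (k + 1)) * (q ^ (k + 1)) ^ j := by
    intro j
    rw [mul_pow, mul_pow, ← pow_right_comm]
    ring
  rw [Finset.sum_congr rfl fun j _ => hstep j, ← Finset.mul_sum]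
  have hgeom : (q ^ n) ^ (k + 1) - 1 ^ (k + 1)
      = (∑ j ∈ Finset.range n, (q ^ (k + 1)) ^ j) * (q ^ (k + 1) - 1) := by
    rw [geom_sum_mul, one_pow, ← pow_right_comm]
  rw [hgeom]
  unfold C
  field_simp
  ring

lemma log_sum_eq (hq0 : 0 < q) (hq1 : q < 1) (hb0 : 0 ≤ b) (hba : b ≤ a) (ha1 : a < 1) (n : ℕ) :
    ∑ j ∈ Finset.range n, Real.log ((1 - a * q ^ j) / (1 - b * q ^ j))
      = F q a b (q ^ n) - F q a b 1 := by
  have hqn0 : (0:ℝ) ≤ q ^ n := (pow_pos hq0 n).le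
  have hqn1 : q ^ n ≤ 1 := pow_le_one₀ hq0.le hq1.le
  have hs1 : Summable (fun k : ℕ => C q a b k * (q ^ n) ^ (k + 1)) :=
    summable_C_mul hq0 hq1 hb0 hba ha1 hqn0 hqn1
  have hs2 : Summable (fun k : ℕ => C q a b k * (1:ℝ) ^ (k + 1)) :=
    summable_C_mul hq0 hq1 hb0 hba ha1 zero_le_one le_rfl
  have h1 : F q a b (q ^ n) - F q a b 1
      = ∑' k : ℕ, (C q a b k * (q ^ n) ^ (k + 1) - C q a b k * (1:ℝ) ^ (k + 1)) := by
    rw [Summable.tsum_sub hs1 hs2]; rfl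
  rw [h1]
  have h2 : ∀ k : ℕ, C q a b k * (q ^ n) ^ (k + 1) - C q a b k * (1:ℝ) ^ (k + 1)
      = ∑ j ∈ Finset.range n, ((b * q ^ j) ^ (k + 1) - (a * q ^ j) ^ (k + 1)) / (k + 1) := by
    intro k
    rw [← mul_sub]
    exact key_alg hq0 hq1 n k
  rw [tsum_congr h2]
  rw [Summable.tsum_finsetSum (fun j _ => (hasSum_log hq0 hq1 hb0 hba ha1 j).summable)]
  exact Finset.sum_congr rfl fun j _ => (hasSum_log hq0 hq1 hb0 hba ha1 j).tsum_eq.symm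

end MidAux

namespace MidAux
variable {q a b : ℝ}

lemma F_nonneg (hq0 : 0 < q) (hq1 : q < 1) (hb0 : 0 ≤ b) (hba : b ≤ a) {x : ℝ}
    (hx0 : 0 ≤ x) : 0 ≤ F q a b x :=
  tsum_nonneg fun k => mul_nonneg (C_nonneg hq0 hq1 hb0 hba k) (pow_nonneg hx0 _)

lemma summable_C (hq0 : 0 < q) (hq1 : q < 1) (hb0 : 0 ≤ b) (hba : b ≤ a) (ha1 : a < 1) :
    Summable (C q a b) := by
  have := summable_C_mul hq0 hq1 hb0 hba ha1 (x := 1) zero_le_one le_rfl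
  simpa using this

lemma F_one (hq0 : 0 < q) (hq1 : q < 1) (hb0 : 0 ≤ b) (hba : b ≤ a) (ha1 : a < 1) :
    F q a b 1 = ∑' k, C q a b k := by
  unfold F; simp

/-- helper: a power function is integrable w.r.t. a finite measure supported in `[0,1]`. -/
lemma integrable_pow_of_compl {μ : Measure ℝ} [IsFiniteMeasure μ]
    (hμ : μ (Set.Icc (0:ℝ) 1)ᶜ = 0) (n : ℕ) : Integrable (fun x : ℝ => x ^ n) μ := by
  refine (integrable_const (1:ℝ)).mono' (continuous_pow n).aestronglyMeasurable ?_
  have hae : ∀ᵐ x ∂μ, x ∈ Set.Icc (0:ℝ) 1 := by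
    have h0 : {x : ℝ | ¬ x ∈ Set.Icc (0:ℝ) 1} = (Set.Icc (0:ℝ) 1)ᶜ := rfl
    rw [ae_iff, h0]; exact hμ
  filter_upwards [hae] with x hx
  rw [Real.norm_eq_abs, abs_of_nonneg (pow_nonneg hx.1 n)]
  exact pow_le_one₀ hx.1 hx.2

/-- the atomic measure `ν = ∑ c_k δ_{q^{k+1}}`. -/
noncomputable def Nu (q a b : ℝ) : Measure ℝ :=
  Measure.sum (fun k : ℕ => ENNReal.ofReal (C q a b k) • Measure.dirac (q ^ (k + 1)))

lemma Nu_univ (hq0 : 0 < q) (hq1 : q < 1) (hb0 : 0 ≤ b) (hba : b ≤ a) (ha1 : a < 1) :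
    Nu q a b Set.univ = ENNReal.ofReal (F q a b 1) := by
  rw [Nu, Measure.sum_apply _ MeasurableSet.univ]
  simp only [Measure.smul_apply, measure_univ, smul_eq_mul, mul_one]
  rw [← ENNReal.ofReal_tsum_of_nonneg (C_nonneg hq0 hq1 hb0 hba)
    (summable_C hq0 hq1 hb0 hba ha1), F_one hq0 hq1 hb0 hba ha1]

lemma Nu_finite (hq0 : 0 < q) (hq1 : q < 1) (hb0 : 0 ≤ b) (hba : b ≤ a) (ha1 : a < 1) :
    IsFiniteMeasure (Nu q a b) := by
  constructor
  rw [Nu_univ hq0 hq1 hb0 hba ha1]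
  exact ENNReal.ofReal_lt_top

lemma mem_Icc_qpow (hq0 : 0 < q) (hq1 : q < 1) (k : ℕ) : q ^ (k + 1) ∈ Set.Icc (0:ℝ) 1 :=
  ⟨(pow_pos hq0 _).le, pow_le_one₀ hq0.le hq1.le⟩

lemma Nu_compl (hq0 : 0 < q) (hq1 : q < 1) :
    Nu q a b (Set.Icc (0:ℝ) 1)ᶜ = 0 := by
  rw [Nu, Measure.sum_apply _ measurableSet_Icc.compl]
  have h : ∀ k : ℕ, (ENNReal.ofReal (C q a b k) • Measure.dirac (q ^ (k + 1)))
      (Set.Icc (0:ℝ) 1)ᶜ = 0 := by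
    intro k
    rw [Measure.smul_apply, Measure.dirac_apply' _ measurableSet_Icc.compl]
    rw [Set.indicator_of_notMem (by simp [mem_Icc_qpow hq0 hq1 k])]
    simp
  simp [h]

lemma Nu_moment (hq0 : 0 < q) (hq1 : q < 1) (hb0 : 0 ≤ b) (hba : b ≤ a) (ha1 : a < 1) (n : ℕ) :
    ∫ x, x ^ n ∂(Nu q a b) = F q a b (q ^ n) := by
  haveI := Nu_finite hq0 hq1 hb0 hba ha1 (q := q) (a := a) (b := b)
  have hint : Integrable (fun x : ℝ => x ^ n) (Nu q a b) :=
    integrable_pow_of_compl (Nu_compl hq0 hq1) n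
  have h1 : HasSum (fun k : ℕ => ∫ x, x ^ n
      ∂(ENNReal.ofReal (C q a b k) • Measure.dirac (q ^ (k + 1))))
      (∫ x, x ^ n ∂(Nu q a b)) := hasSum_integral_measure hint
  have h2 : ∀ k : ℕ, (∫ x, x ^ n
      ∂(ENNReal.ofReal (C q a b k) • Measure.dirac (q ^ (k + 1))))
      = C q a b k * (q ^ n) ^ (k + 1) := by
    intro k
    rw [integral_smul_measure, integral_dirac (fun x : ℝ => x ^ n)]
    rw [ENNReal.toReal_ofReal (C_nonneg hq0 hq1 hb0 hba k), smul_eq_mul, ← pow_right_comm]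
  have h3 : HasSum (fun k : ℕ => C q a b k * (q ^ n) ^ (k + 1)) (∫ x, x ^ n ∂(Nu q a b)) :=
    h1.congr_fun fun k => (h2 k).symm
  rw [← h3.tsum_eq]
  rfl

end MidAux

namespace MidAux
variable {q a b : ℝ}

/-- multiplicative convolution powers of `ν`, starting from `δ_1`. -/
noncomputable def Mu (q a b : ℝ) : ℕ → Measure ℝ
  | 0 => Measure.dirac 1
  | (m + 1) => Measure.map (fun z : ℝ × ℝ => z.1 * z.2) ((Mu q a b m).prod (Nu q a b))

lemma measurable_mul2 : Measurable (fun z : ℝ × ℝ => z.1 * z.2) :=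
  measurable_fst.mul measurable_snd

lemma Mu_props (hq0 : 0 < q) (hq1 : q < 1) (hb0 : 0 ≤ b) (hba : b ≤ a) (ha1 : a < 1) (m : ℕ) :
    IsFiniteMeasure (Mu q a b m) ∧ Mu q a b m (Set.Icc (0:ℝ) 1)ᶜ = 0 ∧
      Mu q a b m Set.univ = (ENNReal.ofReal (F q a b 1)) ^ m ∧
      ∀ n : ℕ, ∫ x, x ^ n ∂(Mu q a b m) = (F q a b (q ^ n)) ^ m := by
  haveI hNufin := Nu_finite hq0 hq1 hb0 hba ha1 (q := q) (a := a) (b := b)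
  induction m with
  | zero =>
    refine ⟨by rw [Mu]; infer_instance, ?_, by simp [Mu], fun n => by simp [Mu]⟩
    rw [Mu, Measure.dirac_apply' _ measurableSet_Icc.compl,
      Set.indicator_of_notMem (by norm_num)]
  | succ m ih =>
    obtain ⟨hfin, hcompl, huniv, hmom⟩ := ih
    haveI := hfin
    refine ⟨by rw [Mu]; exact Measure.isFiniteMeasure_map _ _, ?_, ?_, ?_⟩
    · rw [Mu, Measure.map_apply measurable_mul2 measurableSet_Icc.compl]
      have hsub : (fun z : ℝ × ℝ => z.1 * z.2) ⁻¹' (Set.Icc (0:ℝ) 1)ᶜ ⊆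
          ((Set.Icc (0:ℝ) 1)ᶜ ×ˢ Set.univ) ∪ (Set.univ ×ˢ (Set.Icc (0:ℝ) 1)ᶜ) := by
        intro z hz
        by_contra hcon
        simp only [Set.mem_union, Set.mem_prod, Set.mem_univ, and_true, true_and,
          Set.mem_compl_iff, not_or, not_not] at hcon
        obtain ⟨h1, h2⟩ := hcon
        exact hz ⟨mul_nonneg h1.1 h2.1, mul_le_one₀ h1.2 h2.1 h2.2⟩
      refine measure_mono_null hsub ?_
      refine le_antisymm ?_ zero_le
      refine (measure_union_le _ _).trans ?_
      rw [Measure.prod_prod, Measure.prod_prod, hcompl, Nu_compl hq0 hq1]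
      simp
    · rw [Mu, Measure.map_apply measurable_mul2 MeasurableSet.univ, Set.preimage_univ,
        ← Set.univ_prod_univ, Measure.prod_prod, huniv, Nu_univ hq0 hq1 hb0 hba ha1, pow_succ]
    · intro n
      rw [Mu, integral_map measurable_mul2.aemeasurable
        (continuous_pow n).aestronglyMeasurable]
      have : ∀ z : ℝ × ℝ, (z.1 * z.2) ^ n = z.1 ^ n * z.2 ^ n := fun z => mul_pow _ _ _
      rw [integral_congr_ae (Filter.Eventually.of_forall this),
        integral_prod_mul (fun x : ℝ => x ^ n) (fun y : ℝ => y ^ n),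
        hmom n, Nu_moment hq0 hq1 hb0 hba ha1 n, pow_succ]

end MidAux

namespace MidAux
variable {q a b : ℝ}

/-- the Berger measure: `μ = e^{-s f(1)} ∑_m (s^m/m!) ν^{⊛ m}`. -/
noncomputable def MuS (q a b s : ℝ) : Measure ℝ :=
  Measure.sum (fun m : ℕ =>
    ENNReal.ofReal (Real.exp (-(s * F q a b 1)) * s ^ m / m.factorial) • Mu q a b m)

lemma coef_nonneg (s : ℝ) (hs : 0 < s) (m : ℕ) :
    0 ≤ Real.exp (-(s * F q a b 1)) * s ^ m / m.factorial := by positivity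

lemma MuS_compl (hq0 : 0 < q) (hq1 : q < 1) (hb0 : 0 ≤ b) (hba : b ≤ a) (ha1 : a < 1)
    (s : ℝ) : MuS q a b s (Set.Icc (0:ℝ) 1)ᶜ = 0 := by
  rw [MuS, Measure.sum_apply _ measurableSet_Icc.compl]
  have h : ∀ m : ℕ, (ENNReal.ofReal (Real.exp (-(s * F q a b 1)) * s ^ m / m.factorial) •
      Mu q a b m) (Set.Icc (0:ℝ) 1)ᶜ = 0 := by
    intro m
    rw [Measure.smul_apply, (Mu_props hq0 hq1 hb0 hba ha1 m).2.1]
    simp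
  simp [h]

lemma MuS_finite (hq0 : 0 < q) (hq1 : q < 1) (hb0 : 0 ≤ b) (hba : b ≤ a) (ha1 : a < 1)
    {s : ℝ} (hs : 0 < s) : IsFiniteMeasure (MuS q a b s) := by
  constructor
  rw [MuS, Measure.sum_apply _ MeasurableSet.univ]
  have hF1 : 0 ≤ F q a b 1 := F_nonneg hq0 hq1 hb0 hba zero_le_one
  have h : ∀ m : ℕ, (ENNReal.ofReal (Real.exp (-(s * F q a b 1)) * s ^ m / m.factorial) •
      Mu q a b m) Set.univ
      = ENNReal.ofReal (Real.exp (-(s * F q a b 1)) * ((s * F q a b 1) ^ m / m.factorial)) := by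
    intro m
    rw [Measure.smul_apply, (Mu_props hq0 hq1 hb0 hba ha1 m).2.2.1, smul_eq_mul,
      ← ENNReal.ofReal_pow hF1, ← ENNReal.ofReal_mul (coef_nonneg s hs m)]
    congr 1
    rw [mul_pow]
    ring
  rw [tsum_congr h]
  have hsum : Summable (fun m : ℕ =>
      Real.exp (-(s * F q a b 1)) * ((s * F q a b 1) ^ m / m.factorial)) :=
    (Real.summable_pow_div_factorial (s * F q a b 1)).mul_left _
  have hnn : ∀ m : ℕ, 0 ≤ Real.exp (-(s * F q a b 1)) * ((s * F q a b 1) ^ m / m.factorial) := by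
    intro m
    have : 0 ≤ s * F q a b 1 := mul_nonneg hs.le hF1
    positivity
  rw [← ENNReal.ofReal_tsum_of_nonneg hnn hsum]
  exact ENNReal.ofReal_lt_top

lemma MuS_moment (hq0 : 0 < q) (hq1 : q < 1) (hb0 : 0 ≤ b) (hba : b ≤ a) (ha1 : a < 1)
    {s : ℝ} (hs : 0 < s) (n : ℕ) :
    ∫ x, x ^ n ∂(MuS q a b s)
      = Real.exp (-(s * F q a b 1)) * Real.exp (s * F q a b (q ^ n)) := by
  haveI := MuS_finite hq0 hq1 hb0 hba ha1 hs (q := q) (a := a) (b := b)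
  have hint : Integrable (fun x : ℝ => x ^ n) (MuS q a b s) :=
    integrable_pow_of_compl (MuS_compl hq0 hq1 hb0 hba ha1 s) n
  have h1 : HasSum (fun m : ℕ => ∫ x, x ^ n
      ∂(ENNReal.ofReal (Real.exp (-(s * F q a b 1)) * s ^ m / m.factorial) • Mu q a b m))
      (∫ x, x ^ n ∂(MuS q a b s)) := hasSum_integral_measure hint
  have hFq : 0 ≤ F q a b (q ^ n) := F_nonneg hq0 hq1 hb0 hba (pow_pos hq0 n).le
  have h2 : ∀ m : ℕ, (∫ x, x ^ n
      ∂(ENNReal.ofReal (Real.exp (-(s * F q a b 1)) * s ^ m / m.factorial) • Mu q a b m))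
      = Real.exp (-(s * F q a b 1)) * ((s * F q a b (q ^ n)) ^ m / m.factorial) := by
    intro m
    haveI := (Mu_props hq0 hq1 hb0 hba ha1 m).1
    rw [integral_smul_measure, ENNReal.toReal_ofReal (coef_nonneg s hs m), smul_eq_mul,
      (Mu_props hq0 hq1 hb0 hba ha1 m).2.2.2 n, mul_pow]
    ring
  have h3 : HasSum (fun m : ℕ =>
      Real.exp (-(s * F q a b 1)) * ((s * F q a b (q ^ n)) ^ m / m.factorial))
      (∫ x, x ^ n ∂(MuS q a b s)) := h1.congr_fun fun m => (h2 m).symm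
  have h4 : HasSum (fun m : ℕ =>
      Real.exp (-(s * F q a b 1)) * ((s * F q a b (q ^ n)) ^ m / m.factorial))
      (Real.exp (-(s * F q a b 1)) * Real.exp (s * F q a b (q ^ n))) := by
    have := (NormedSpace.expSeries_div_hasSum_exp (s * F q a b (q ^ n))).mul_left
      (Real.exp (-(s * F q a b 1)))
    rw [Real.exp_eq_exp_ℝ] at this ⊢
    exact this
  exact h3.unique h4
end MidAux

namespace MidAux
variable {q a b : ℝ}

lemma r_pos (hq0 : 0 < q) (hq1 : q < 1) (hb0 : 0 ≤ b) (hba : b ≤ a) (ha1 : a < 1) (j : ℕ) :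
    0 < (1 - a * q ^ j) / (1 - b * q ^ j) := by
  have h1 : a * q ^ j < 1 := aux_lt_one hq0 hq1 (hb0.trans hba) ha1 j
  have h2 : b * q ^ j < 1 := aux_lt_one hq0 hq1 hb0 (hba.trans_lt ha1) j
  apply div_pos <;> linarith

lemma r_le_one (hq0 : 0 < q) (hq1 : q < 1) (hb0 : 0 ≤ b) (hba : b ≤ a) (ha1 : a < 1) (j : ℕ) :
    (1 - a * q ^ j) / (1 - b * q ^ j) ≤ 1 := by
  have h2 : b * q ^ j < 1 := aux_lt_one hq0 hq1 hb0 (hba.trans_lt ha1) j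
  have h3 : b * q ^ j ≤ a * q ^ j := mul_le_mul_of_nonneg_right hba (pow_pos hq0 j).le
  rw [div_le_one (by linarith)]
  linarith

lemma core (hq0 : 0 < q) (hq1 : q < 1) (hb0 : 0 ≤ b) (hba : b ≤ a) (ha1 : a < 1) :
    IsMIDWeight (fun n => Real.sqrt ((1 - a * q ^ n) / (1 - b * q ^ n))) := by
  intro s hs
  refine ⟨?_, ⟨1, ?_⟩, MuS q a b s, MuS_finite hq0 hq1 hb0 hba ha1 hs,
    ⟨Set.Icc 0 1, isCompact_Icc, fun x hx => hx.1, MuS_compl hq0 hq1 hb0 hba ha1 s⟩,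
    fun n => ?_⟩
  · intro n
    exact Real.rpow_pos_of_pos (Real.sqrt_pos.2 (r_pos hq0 hq1 hb0 hba ha1 n)) s
  · intro n
    refine Real.rpow_le_one (Real.sqrt_nonneg _) ?_ hs.le
    have := Real.sqrt_le_sqrt (r_le_one hq0 hq1 hb0 hba ha1 n)
    simpa using this
  · -- moments identity
    rw [MuS_moment hq0 hq1 hb0 hba ha1 hs n]
    have hterm : ∀ j : ℕ, (Real.sqrt ((1 - a * q ^ j) / (1 - b * q ^ j)) ^ s) ^ 2
        = Real.exp (s * Real.log ((1 - a * q ^ j) / (1 - b * q ^ j))) := by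
      intro j
      set t := (1 - a * q ^ j) / (1 - b * q ^ j) with ht
      have htpos : 0 < t := r_pos hq0 hq1 hb0 hba ha1 j
      have h1 : (Real.sqrt t ^ s) ^ (2:ℕ) = Real.sqrt t ^ (s * 2) := by
        rw [← Real.rpow_natCast (Real.sqrt t ^ s) 2, ← Real.rpow_mul (Real.sqrt_nonneg t)]
        norm_num
      rw [h1, Real.sqrt_eq_rpow, ← Real.rpow_mul htpos.le]
      rw [Real.rpow_def_of_pos htpos]
      ring_nf
    rw [moments]
    rw [Finset.prod_congr rfl fun j _ => hterm j, ← Real.exp_sum, ← Finset.mul_sum,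
      log_sum_eq hq0 hq1 hb0 hba ha1 n, ← Real.exp_add]
    ring_nf

end MidAux

/-- key step in Theorem 3.1(2): `(M,P) ≫ (−P,−M)`; equivalently the
sequence `√((p^{2n}−M²)/(p^{2n}−P²))` is an MID weight sequence. -/
theorem midSubord_reverse_negate (p M P : ℝ) (hp : 1 < p)
    (hM : -1 < M) (hM' : M < 1) (hP : -1 < P) (hP' : P < 1)
    (habs : |P| ≤ |M|) :
    MIDSubord p M P (-P) (-M) ∧
      IsMIDWeight (fun n => Real.sqrt ((p ^ (2 * n) - M ^ 2) / (p ^ (2 * n) - P ^ 2))) := by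
  set a := M ^ 2 with ha
  set b := P ^ 2 with hb
  set q := (p ^ 2)⁻¹ with hq
  have hp0 : 0 < p := lt_trans one_pos hp
  have hp2 : 1 < p ^ 2 := one_lt_pow₀ hp (by norm_num)
  have hq0 : 0 < q := inv_pos.2 (by positivity)
  have hq1 : q < 1 := inv_lt_one_of_one_lt₀ hp2
  have hb0 : 0 ≤ b := sq_nonneg P
  have hba : b ≤ a := by
    rw [ha, hb, ← sq_abs M, ← sq_abs P]
    exact pow_le_pow_left₀ (abs_nonneg P) habs 2
  have ha1 : a < 1 := by
    rw [ha, ← sq_abs M]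
    have : |M| < 1 := abs_lt.2 ⟨hM, hM'⟩
    nlinarith [abs_nonneg M]
  have hcore := MidAux.core hq0 hq1 hb0 hba ha1
  -- rewrite the second function into the core form
  have hXpos : ∀ n : ℕ, (0:ℝ) < (p ^ 2) ^ n := fun n => by positivity
  have hX1 : ∀ n : ℕ, (1:ℝ) ≤ (p ^ 2) ^ n := fun n => one_le_pow₀ hp2.le
  have harg : ∀ n : ℕ, (p ^ (2 * n) - a) / (p ^ (2 * n) - b)
      = (1 - a * q ^ n) / (1 - b * q ^ n) := by
    intro n
    have hXne : ((p ^ 2) ^ n : ℝ) ≠ 0 := (hXpos n).ne'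
    rw [pow_mul, hq, inv_pow]
    rw [div_eq_div_iff (by nlinarith [hX1 n]) ?_]
    · field_simp
    · have h1 : b * ((p ^ 2) ^ n)⁻¹ < 1 := by
        rw [← div_eq_mul_inv, div_lt_one (hXpos n)]
        nlinarith [hX1 n]
      linarith
  have h2 : (fun n => Real.sqrt ((p ^ (2 * n) - M ^ 2) / (p ^ (2 * n) - P ^ 2)))
      = (fun n => Real.sqrt ((1 - a * q ^ n) / (1 - b * q ^ n))) := by
    funext n
    rw [← ha, ← hb, harg n]
  have h1 : (fun n => grws p M P n / grws p (-P) (-M) n)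
      = (fun n => Real.sqrt ((p ^ (2 * n) - M ^ 2) / (p ^ (2 * n) - P ^ 2))) := by
    funext n
    have hpn1 : (1:ℝ) ≤ p ^ n := one_le_pow₀ hp.le
    have hA : 0 < p ^ n + M := by linarith
    have hB : 0 < p ^ n + P := by linarith
    have hC : 0 < p ^ n + -P := by linarith
    have hD : 0 < p ^ n + -M := by linarith
    rw [grws, grws, ← Real.sqrt_div (by positivity)]
    congr 1
    rw [show 2 * n = n * 2 from mul_comm 2 n, pow_mul]
    rw [div_div_div_eq]
    rw [div_eq_div_iff (by positivity) (by nlinarith [sq_abs P, abs_lt.2 ⟨hP, hP'⟩, hpn1, sq_nonneg (p^n)])]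
    ring
  constructor
  · rw [MIDSubord, h1, h2]
    exact hcore
  · rw [h2]
    exact hcore
end

section
/- (Complete monotonicity claim in the proof of Lemma 3.2.) Fix p > 1 and let M, P be reals with |M| < 1, |P| < 1 and MP ≥ 0. Then the function x ↦ p^x (p^{2x} + MP) / ((p^{2x} − M²)(p^{2x} − P²)) is completely monotone on (0,∞). -/
open Real Filter Set Finset

/-! ### Auxiliary series lemmas -/

lemma hasSum_odd_geom {a : ℝ} (ha : |a| < 1) :
    HasSum (fun k : ℕ => a ^ (2 * k + 1)) (a / (1 - a ^ 2)) := by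
  have := (hasSum_geometric_of_norm_lt_one
    (by rw [Real.norm_eq_abs, abs_pow]; nlinarith [abs_nonneg a] : ‖a^2‖ < 1)).mul_left a
  rw [div_eq_mul_inv]
  have e : (fun k : ℕ => a ^ (2 * k + 1)) = fun i : ℕ => a * (a ^ 2) ^ i := by
    funext k
    rw [pow_add, pow_mul, pow_one, mul_comm]
  rw [e]; exact this

lemma hasSum_d {a b : ℝ} (ha : |a| < 1) (hb : |b| < 1) :
    HasSum (fun k : ℕ => ∑ i ∈ Finset.range (2 * k + 1), a ^ i * b ^ (2 * k - i))
      ((1 + a * b) / ((1 - a ^ 2) * (1 - b ^ 2))) := by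
  have ha2 : (0 : ℝ) < 1 - a ^ 2 := by nlinarith [abs_nonneg a, sq_abs a]
  have hb2 : (0 : ℝ) < 1 - b ^ 2 := by nlinarith [abs_nonneg b, sq_abs b]
  rcases eq_or_ne a b with rfl | hab
  · have h2 : ‖a ^ 2‖ < 1 := by
      rw [Real.norm_eq_abs, abs_pow]; nlinarith [abs_nonneg a]
    have hsum := ((hasSum_coe_mul_geometric_of_norm_lt_one h2).mul_left 2).add
      (hasSum_geometric_of_norm_lt_one h2)
    have hfun : (fun k : ℕ => ∑ i ∈ Finset.range (2 * k + 1), a ^ i * a ^ (2 * k - i))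
        = fun k : ℕ => 2 * ((k : ℝ) * (a ^ 2) ^ k) + (a ^ 2) ^ k := by
      funext k
      have : ∀ i ∈ Finset.range (2 * k + 1), a ^ i * a ^ (2 * k - i) = a ^ (2 * k) := by
        intro i hi
        rw [Finset.mem_range] at hi
        rw [← pow_add]
        congr 1
        omega
      rw [Finset.sum_congr rfl this, Finset.sum_const, Finset.card_range, nsmul_eq_mul]
      push_cast
      rw [pow_mul]
      ring
    have hval : (1 + a * a) / ((1 - a ^ 2) * (1 - a ^ 2))
        = 2 * (a ^ 2 / (1 - a ^ 2) ^ 2) + (1 - a ^ 2)⁻¹ := by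
      field_simp
      ring
    rw [hfun, hval]
    exact hsum
  · have hab' : a - b ≠ 0 := sub_ne_zero.mpr hab
    have hsum := ((hasSum_odd_geom ha).sub (hasSum_odd_geom hb)).mul_right (a - b)⁻¹
    have hfun : (fun k : ℕ => ∑ i ∈ Finset.range (2 * k + 1), a ^ i * b ^ (2 * k - i))
        = fun k : ℕ => (a ^ (2 * k + 1) - b ^ (2 * k + 1)) * (a - b)⁻¹ := by
      funext k
      have hg := geom_sum₂_mul a b (2 * k + 1)
      have h1 : ∑ i ∈ Finset.range (2 * k + 1), a ^ i * b ^ (2 * k + 1 - 1 - i)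
          = ∑ i ∈ Finset.range (2 * k + 1), a ^ i * b ^ (2 * k - i) := by
        apply Finset.sum_congr rfl; intro i hi; congr 2
      rw [h1] at hg
      rw [eq_mul_inv_iff_mul_eq₀ hab']
      exact hg
    have hval : (1 + a * b) / ((1 - a ^ 2) * (1 - b ^ 2))
        = (a / (1 - a ^ 2) - b / (1 - b ^ 2)) * (a - b)⁻¹ := by
      field_simp
      ring
    rw [hfun, hval]
    exact hsum

lemma summable_poly_geom (m : ℕ) {q : ℝ} (h0 : 0 < q) (h1 : q < 1) :
    Summable (fun k : ℕ => (2 * (k : ℝ) + 1) ^ m * q ^ k) := by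
  have hq : ‖q‖ < 1 := by rw [Real.norm_eq_abs, abs_of_pos h0]; exact h1
  have h := summable_pow_mul_geometric_of_norm_lt_one m hq
  have h2 := ((summable_nat_add_iff 1).mpr h).mul_left (2 ^ m / q)
  apply h2.of_nonneg_of_le
  · intro k; positivity
  · intro k
    have hk1 : (2 * (k : ℝ) + 1) ^ m ≤ (2 * ((k : ℝ) + 1)) ^ m := by
      apply pow_le_pow_left₀ (by positivity); linarith
    calc (2 * (k : ℝ) + 1) ^ m * q ^ k ≤ (2 * ((k : ℝ) + 1)) ^ m * q ^ k := by
          apply mul_le_mul_of_nonneg_right hk1 (by positivity)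
      _ = 2 ^ m / q * ((↑(k + 1)) ^ m * q ^ (k + 1)) := by
          push_cast
          rw [mul_pow, pow_succ]
          field_simp

lemma even_pow_mul_nonneg {M P : ℝ} (h : 0 ≤ M * P) {m n : ℕ} (hmn : Even (m + n)) :
    0 ≤ M ^ m * P ^ n := by
  rcases Nat.even_or_odd m with hm | hm
  · have hn : Even n := (Nat.even_add.mp hmn).mp hm
    obtain ⟨a, rfl⟩ := hm
    obtain ⟨b, rfl⟩ := hn
    have : M ^ (a + a) * P ^ (b + b) = (M ^ a) ^ 2 * (P ^ b) ^ 2 := by ring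
    rw [this]; positivity
  · have hn : Odd n := by
      by_contra hc
      exact (Nat.not_even_iff_odd.mpr hm) ((Nat.even_add.mp hmn).mpr (Nat.not_odd_iff_even.mp hc))
    obtain ⟨a, rfl⟩ := hm
    obtain ⟨b, rfl⟩ := hn
    have : M ^ (2 * a + 1) * P ^ (2 * b + 1) = (M ^ a) ^ 2 * (P ^ b) ^ 2 * (M * P) := by ring
    rw [this]
    positivity

/-! ### The exponential series and its derivatives -/

section core
variable {c : ℕ → ℝ} {L : ℝ}

/-- the `m`-th formal derivative of the series `∑ c k · exp(-(2k+1)L x)` -/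
noncomputable def Fser (c : ℕ → ℝ) (L : ℝ) (m : ℕ) (x : ℝ) : ℝ :=
  ∑' k : ℕ, c k * (-((2 * (k : ℝ) + 1) * L)) ^ m * Real.exp (-((2 * (k : ℝ) + 1) * L) * x)

lemma term_norm_bound (hc0 : ∀ k, 0 ≤ c k) (hcb : ∀ k, c k ≤ 2 * k + 1) (hL : 0 < L)
    (m : ℕ) {ε x : ℝ} (hε : 0 < ε) (hx : ε ≤ x) (k : ℕ) :
    ‖c k * (-((2 * (k : ℝ) + 1) * L)) ^ m * Real.exp (-((2 * (k : ℝ) + 1) * L) * x)‖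
      ≤ (2 * (k : ℝ) + 1) ^ (m + 1) * (L ^ m * Real.exp (-(L * ε))) * Real.exp (-(2 * L * ε)) ^ k := by
  have hk : (0:ℝ) < 2 * (k:ℝ) + 1 := by positivity
  have hE : Real.exp (-((2 * (k : ℝ) + 1) * L) * x) ≤ Real.exp (-((2 * (k : ℝ) + 1) * L) * ε) := by
    apply Real.exp_le_exp.mpr
    have := mul_le_mul_of_nonneg_left hx (le_of_lt (mul_pos hk hL))
    linarith
  have hEsplit : Real.exp (-((2 * (k : ℝ) + 1) * L) * ε)
      = Real.exp (-(L * ε)) * Real.exp (-(2 * L * ε)) ^ k := by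
    rw [← Real.exp_nat_mul, ← Real.exp_add]
    congr 1
    ring
  rw [norm_mul, norm_mul, norm_pow, Real.norm_eq_abs, Real.norm_eq_abs, Real.norm_eq_abs,
    abs_of_nonneg (hc0 k), abs_neg, abs_of_pos (by positivity : (0:ℝ) < (2 * (k : ℝ) + 1) * L),
    abs_of_pos (Real.exp_pos _)]
  calc c k * ((2 * (k : ℝ) + 1) * L) ^ m * Real.exp (-((2 * (k : ℝ) + 1) * L) * x)
      ≤ (2 * (k : ℝ) + 1) * ((2 * (k : ℝ) + 1) * L) ^ m * Real.exp (-((2 * (k : ℝ) + 1) * L) * ε) := by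
        apply mul_le_mul (mul_le_mul_of_nonneg_right (hcb k) (by positivity)) hE
          (le_of_lt (Real.exp_pos _)) (by positivity)
    _ = (2 * (k : ℝ) + 1) ^ (m + 1) * (L ^ m * Real.exp (-(L * ε))) * Real.exp (-(2 * L * ε)) ^ k := by
        rw [hEsplit, mul_pow, pow_succ]
        ring

lemma summable_bound (hL : 0 < L) (m : ℕ) {ε : ℝ} (hε : 0 < ε) :
    Summable (fun k : ℕ =>
      (2 * (k : ℝ) + 1) ^ (m + 1) * (L ^ m * Real.exp (-(L * ε))) * Real.exp (-(2 * L * ε)) ^ k) := by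
  have hq0 : (0:ℝ) < Real.exp (-(2 * L * ε)) := Real.exp_pos _
  have hq1 : Real.exp (-(2 * L * ε)) < 1 := Real.exp_lt_one_iff.mpr (by nlinarith)
  have := (summable_poly_geom (m + 1) hq0 hq1).mul_left (L ^ m * Real.exp (-(L * ε)))
  apply this.congr
  intro k
  ring

lemma summable_term (hc0 : ∀ k, 0 ≤ c k) (hcb : ∀ k, c k ≤ 2 * k + 1) (hL : 0 < L)
    (m : ℕ) {x : ℝ} (hx : 0 < x) :
    Summable (fun k : ℕ =>
      c k * (-((2 * (k : ℝ) + 1) * L)) ^ m * Real.exp (-((2 * (k : ℝ) + 1) * L) * x)) := by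
  apply Summable.of_norm_bounded (summable_bound hL m hx)
  exact fun k => term_norm_bound hc0 hcb hL m hx le_rfl k

lemma hasDerivAt_Fser (hc0 : ∀ k, 0 ≤ c k) (hcb : ∀ k, c k ≤ 2 * k + 1) (hL : 0 < L)
    (m : ℕ) {x : ℝ} (hx : x ∈ Set.Ioi (0:ℝ)) :
    HasDerivAt (Fser c L m) (Fser c L (m + 1) x) x := by
  refine hasDerivAt_of_tendstoLocallyUniformlyOn (l := (atTop : Filter ℕ)) isOpen_Ioi
    (f := fun (N : ℕ) (y : ℝ) => ∑ k ∈ Finset.range N,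
      c k * (-((2 * (k : ℝ) + 1) * L)) ^ m * Real.exp (-((2 * (k : ℝ) + 1) * L) * y))
    (f' := fun (N : ℕ) (y : ℝ) => ∑ k ∈ Finset.range N,
      c k * (-((2 * (k : ℝ) + 1) * L)) ^ (m + 1) * Real.exp (-((2 * (k : ℝ) + 1) * L) * y))
    ?_ ?_ ?_ hx
  · rw [tendstoLocallyUniformlyOn_iff_forall_isCompact isOpen_Ioi]
    intro K hKs hKc
    rcases K.eq_empty_or_nonempty with rfl | hne
    · intro u hu; simp
    · set ε := sInf K with hεdef
      have hεK : ε ∈ K := hKc.sInf_mem hne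
      have hε : 0 < ε := hKs hεK
      have hsub : K ⊆ Set.Ici ε := fun y hy => csInf_le hKc.bddBelow hy
      exact (tendstoUniformlyOn_tsum_nat (summable_bound hL (m+1) hε)
        (fun k y hy => term_norm_bound hc0 hcb hL (m+1) hε hy k)).mono hsub
  · filter_upwards with N y hy
    apply HasDerivAt.fun_sum
    intro k _
    have h1 : HasDerivAt (fun z : ℝ => Real.exp (-((2 * (k : ℝ) + 1) * L) * z))
        (Real.exp (-((2 * (k : ℝ) + 1) * L) * y) * (-((2 * (k : ℝ) + 1) * L) * 1)) y :=
      ((hasDerivAt_id y).const_mul (-((2 * (k : ℝ) + 1) * L))).exp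
    have h2 := h1.const_mul (c k * (-((2 * (k : ℝ) + 1) * L)) ^ m)
    refine h2.congr_deriv ?_
    rw [pow_succ]
    ring
  · intro y hy
    exact (summable_term hc0 hcb hL m hy).hasSum.tendsto_sum_nat

lemma iteratedDeriv_Fser (hc0 : ∀ k, 0 ≤ c k) (hcb : ∀ k, c k ≤ 2 * k + 1) (hL : 0 < L)
    (n : ℕ) : ∀ x : ℝ, 0 < x → iteratedDeriv n (Fser c L 0) x = Fser c L n x := by
  induction n with
  | zero => intro x hx; simp
  | succ n ih =>
    intro x hx
    rw [iteratedDeriv_succ]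
    have heq : iteratedDeriv n (Fser c L 0) =ᶠ[nhds x] Fser c L n :=
      Filter.eventuallyEq_of_mem (isOpen_Ioi.mem_nhds hx) (fun y hy => ih y hy)
    rw [heq.deriv_eq]
    exact (hasDerivAt_Fser hc0 hcb hL n hx).deriv

lemma Fser_sign (hc0 : ∀ k, 0 ≤ c k) (hL : 0 < L) (n : ℕ) (x : ℝ) :
    0 ≤ (-1 : ℝ) ^ n * Fser c L n x := by
  rw [Fser, ← tsum_mul_left]
  apply tsum_nonneg
  intro k
  have h1 : (-1:ℝ) ^ n * (-((2 * (k : ℝ) + 1) * L)) ^ n = ((2 * (k : ℝ) + 1) * L) ^ n := by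
    rw [← mul_pow]
    norm_num
  calc (0:ℝ) ≤ ((2 * (k : ℝ) + 1) * L) ^ n
        * (c k * Real.exp (-((2 * (k : ℝ) + 1) * L) * x)) := by
        have := hc0 k
        positivity
    _ = ((-1:ℝ) ^ n * (-((2 * (k : ℝ) + 1) * L)) ^ n)
        * (c k * Real.exp (-((2 * (k : ℝ) + 1) * L) * x)) := by rw [h1]
    _ = (-1 : ℝ) ^ n * (c k * (-((2 * (k : ℝ) + 1) * L)) ^ n
        * Real.exp (-((2 * (k : ℝ) + 1) * L) * x)) := by ring

end core

/-- A function is completely monotone on `(0,∞)` if it is smooth there and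
`(-1)^n f^{(n)}(x) ≥ 0` for all `n ≥ 0` and `x > 0`. -/
def CompletelyMonotoneOnPos (f : ℝ → ℝ) : Prop :=
  ContDiffOn ℝ (⊤ : ℕ∞) f (Set.Ioi 0) ∧
  ∀ (n : ℕ) (x : ℝ), 0 < x → 0 ≤ (-1 : ℝ) ^ n * iteratedDeriv n f x

set_option maxHeartbeats 2000000 in
/-- complete monotonicity claim in the proof of Lemma 3.2. -/
theorem completelyMonotone_lemma32 (p M P : ℝ) (hp : 1 < p)
    (hM : |M| < 1) (hP : |P| < 1) (hMP : 0 ≤ M * P) :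
    CompletelyMonotoneOnPos
      (fun x : ℝ => p ^ x * (p ^ (2 * x) + M * P) /
        ((p ^ (2 * x) - M ^ 2) * (p ^ (2 * x) - P ^ 2))) := by
  have hp0 : (0:ℝ) < p := lt_trans one_pos hp
  set L : ℝ := Real.log p with hLdef
  have hL : 0 < L := Real.log_pos hp
  set c : ℕ → ℝ := fun k => ∑ i ∈ Finset.range (2 * k + 1), M ^ i * P ^ (2 * k - i) with hcdef
  have hc0 : ∀ k, 0 ≤ c k := by
    intro k
    apply Finset.sum_nonneg
    intro i hi
    rw [Finset.mem_range] at hi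
    apply even_pow_mul_nonneg hMP
    have : i + (2 * k - i) = 2 * k := by omega
    rw [this]
    exact ⟨k, by omega⟩
  have hcb : ∀ k : ℕ, c k ≤ 2 * (k:ℝ) + 1 := by
    intro k
    calc c k ≤ ∑ _i ∈ Finset.range (2 * k + 1), (1:ℝ) := by
          apply Finset.sum_le_sum
          intro i hi
          calc M ^ i * P ^ (2 * k - i) ≤ |M ^ i * P ^ (2 * k - i)| := le_abs_self _
            _ = |M| ^ i * |P| ^ (2 * k - i) := by rw [abs_mul, abs_pow, abs_pow]
            _ ≤ 1 * 1 := by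
                apply mul_le_mul (pow_le_one₀ (abs_nonneg _) hM.le)
                  (pow_le_one₀ (abs_nonneg _) hP.le) (by positivity) one_pos.le
            _ = 1 := one_mul 1
      _ = 2 * (k:ℝ) + 1 := by
          rw [Finset.sum_const, Finset.card_range, nsmul_eq_mul, mul_one]
          push_cast
          ring
  -- the function agrees with `Fser c L 0` on `Ioi 0`
  have hfeq : ∀ x ∈ Set.Ioi (0:ℝ),
      (fun x : ℝ => p ^ x * (p ^ (2 * x) + M * P) /
        ((p ^ (2 * x) - M ^ 2) * (p ^ (2 * x) - P ^ 2))) x = Fser c L 0 x := by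
    intro x hx
    rw [Set.mem_Ioi] at hx
    set t : ℝ := p ^ x with htdef
    have ht1 : 1 < t := (Real.one_lt_rpow_iff_of_pos hp0).mpr (Or.inl ⟨hp, hx⟩)
    have ht0 : (0:ℝ) < t := lt_trans one_pos ht1
    have htexp : t = Real.exp (L * x) := Real.rpow_def_of_pos hp0 x
    set q : ℝ := t⁻¹ with hqdef
    have hq0 : 0 < q := inv_pos.mpr ht0
    have hq1 : q < 1 := by
      rw [hqdef, inv_lt_one_iff₀]; right; exact ht1
    have hqexp : q = Real.exp (-(L * x)) := by rw [hqdef, htexp, Real.exp_neg]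
    have ht2 : p ^ (2 * x) = t ^ 2 := by
      rw [htdef, ← Real.rpow_natCast (p ^ x) 2, ← Real.rpow_mul hp0.le]
      norm_num
      rw [mul_comm]
    have haM : |M * q| < 1 := by
      rw [abs_mul, abs_of_pos hq0]
      nlinarith [abs_nonneg M]
    have haP : |P * q| < 1 := by
      rw [abs_mul, abs_of_pos hq0]
      nlinarith [abs_nonneg P]
    -- the series sums to the closed form
    have hsum := (hasSum_d haM haP).mul_left q
    have hterm : ∀ k : ℕ, c k * (-((2 * (k : ℝ) + 1) * L)) ^ 0
        * Real.exp (-((2 * (k : ℝ) + 1) * L) * x)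
        = q * ∑ i ∈ Finset.range (2 * k + 1), (M * q) ^ i * (P * q) ^ (2 * k - i) := by
      intro k
      have hexpq : Real.exp (-((2 * (k : ℝ) + 1) * L) * x) = q ^ (2 * k + 1) := by
        rw [hqexp, ← Real.exp_nat_mul]
        congr 1
        push_cast
        ring
      rw [pow_zero, mul_one, hexpq, hcdef]
      rw [Finset.sum_mul, Finset.mul_sum]
      apply Finset.sum_congr rfl
      intro i hi
      rw [Finset.mem_range] at hi
      rw [mul_pow, mul_pow, show 2 * k + 1 = i + (2 * k - i) + 1 from by omega,
        pow_add, pow_add, pow_one]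
      ring
    have hFval : Fser c L 0 x
        = q * ((1 + M * q * (P * q)) / ((1 - (M * q) ^ 2) * (1 - (P * q) ^ 2))) := by
      rw [Fser]
      rw [show (fun k : ℕ => c k * (-((2 * (k : ℝ) + 1) * L)) ^ 0
          * Real.exp (-((2 * (k : ℝ) + 1) * L) * x))
        = fun k : ℕ => q * ∑ i ∈ Finset.range (2 * k + 1), (M * q) ^ i * (P * q) ^ (2 * k - i)
        from funext hterm]
      exact hsum.tsum_eq
    rw [hFval]
    show p ^ x * (p ^ (2 * x) + M * P) /
        ((p ^ (2 * x) - M ^ 2) * (p ^ (2 * x) - P ^ 2))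
      = q * ((1 + M * q * (P * q)) / ((1 - (M * q) ^ 2) * (1 - (P * q) ^ 2)))
    -- final algebra
    have hM2 : M ^ 2 < 1 := by nlinarith [abs_nonneg M, sq_abs M]
    have hP2 : P ^ 2 < 1 := by nlinarith [abs_nonneg P, sq_abs P]
    have hdM : t ^ 2 - M ^ 2 ≠ 0 := by nlinarith
    have hdP : t ^ 2 - P ^ 2 ≠ 0 := by nlinarith
    have hdM' : 1 - (M * q) ^ 2 ≠ 0 := by
      rw [hqdef]
      have h : 1 - (M * t⁻¹)^2 = (t^2 - M^2) / t^2 := by field_simp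
      rw [h]; positivity
    have hdP' : 1 - (P * q) ^ 2 ≠ 0 := by
      rw [hqdef]
      have h : 1 - (P * t⁻¹)^2 = (t^2 - P^2) / t^2 := by field_simp
      rw [h]; positivity
    rw [ht2, hqdef]
    rw [hqdef] at hdM' hdP'
    have ht0' : t ≠ 0 := ne_of_gt ht0
    field_simp
    ring
  constructor
  · -- smoothness
    have h1 : ContDiff ℝ (⊤ : ℕ∞) fun x : ℝ => p ^ x := by
      have he : (fun x : ℝ => p ^ x) = fun x => Real.exp (Real.log p * x) := by
        funext x; exact Real.rpow_def_of_pos hp0 x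
      rw [he]
      exact Real.contDiff_exp.comp (contDiff_const.mul contDiff_id)
    have h2 : ContDiff ℝ (⊤ : ℕ∞) fun x : ℝ => p ^ (2 * x) := by
      have he : (fun x : ℝ => p ^ (2 * x)) = fun x => Real.exp (Real.log p * (2 * x)) := by
        funext x; exact Real.rpow_def_of_pos hp0 _
      rw [he]
      exact Real.contDiff_exp.comp (contDiff_const.mul (contDiff_const.mul contDiff_id))
    apply ContDiffOn.div
    · exact (h1.mul (h2.add contDiff_const)).contDiffOn
    · exact ((h2.sub contDiff_const).mul (h2.sub contDiff_const)).contDiffOn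
    · intro x hx
      rw [Set.mem_Ioi] at hx
      have hgt : 1 < p ^ (2 * x) :=
        (Real.one_lt_rpow_iff_of_pos hp0).mpr (Or.inl ⟨hp, by linarith⟩)
      have hM2 : M ^ 2 < 1 := by nlinarith [abs_nonneg M, sq_abs M]
      have hP2 : P ^ 2 < 1 := by nlinarith [abs_nonneg P, sq_abs P]
      have : 0 < (p ^ (2 * x) - M ^ 2) * (p ^ (2 * x) - P ^ 2) := by nlinarith
      exact ne_of_gt this
  · -- sign condition
    intro n x hx
    have hev : (fun x : ℝ => p ^ x * (p ^ (2 * x) + M * P) /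
        ((p ^ (2 * x) - M ^ 2) * (p ^ (2 * x) - P ^ 2))) =ᶠ[nhds x] Fser c L 0 :=
      Filter.eventuallyEq_of_mem (isOpen_Ioi.mem_nhds hx) hfeq
    rw [hev.iteratedDeriv_eq n, iteratedDeriv_Fser hc0 hcb hL n x hx]
    exact Fser_sign hc0 hL n x
end
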